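/- arXiv:2204.03991 — 8 statements merged into one kernel-verified Lean document; each statement's English description precedes it below -/
import Mathlib

section
/- (Lipschitz continuity of value functions in the policy) For stationary joint policies π, π' in a γ-discounted stochastic game with rewards bounded in [-1,1], for every state s and player i: |V_i^π(s) - V_i^{π'}(s)| ≤ (1/(1-γ)) · max_{s'} ||π(·|s') - π'(·|s')||_1, and |Q_i^π(s,a) - Q_i^{π'}(s,a)| ≤ (γ/(1-γ)) · max_{s'} ||π(·|s') - π'(·|s')||_1 for every joint action a. -/
open scoped BigOperators

namespace Stmt2

variable {S A I : Type*} [Fintype S] [Fintype A] [DecidableEq S] [Nonempty S]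

def IsKernel (P : S → A → S → ℝ) : Prop :=
  (∀ s a s', 0 ≤ P s a s') ∧ ∀ s a, ∑ s', P s a s' = 1

def IsPolicy (π : S → A → ℝ) : Prop :=
  (∀ s a, 0 ≤ π s a) ∧ ∀ s, ∑ a, π s a = 1

noncomputable def step (P : S → A → S → ℝ) (π : S → A → ℝ) (d : S → ℝ) : S → ℝ :=
  fun s' => ∑ s, ∑ a, d s * π s a * P s a s'

noncomputable def dist (P : S → A → S → ℝ) (π : S → A → ℝ) (s₀ : S) (h : ℕ) : S → ℝ :=
  (step P π)^[h] (fun s => if s = s₀ then (1 : ℝ) else 0)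

/-- Normalized discounted value function. -/
noncomputable def val (γ : ℝ) (P : S → A → S → ℝ) (π : S → A → ℝ) (r : S → A → ℝ)
    (s₀ : S) : ℝ :=
  (1 - γ) * ∑' h : ℕ, γ ^ h * ∑ s, dist P π s₀ h s * ∑ a, π s a * r s a

/-- Normalized discounted action-value function
`Q^π(s,a) = (1-γ) r(s,a) + γ E_{s' ~ P(·|s,a)}[V^π(s')]`. -/
noncomputable def qval (γ : ℝ) (P : S → A → S → ℝ) (π : S → A → ℝ) (r : S → A → ℝ)
    (s : S) (a : A) : ℝ :=
  (1 - γ) * r s a + γ * ∑ s', P s a s' * val γ P π r s'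

end Stmt2

/-!
Let `ε` bound the L1 distance between `π(·|s)` and `π'(·|s)` at every state. One transition
under `π` versus `π'` adds at most `ε` to the L1 distance between two state distributions, so
the `h`-step distributions from `s₀` differ by at most `h ε`, and the expected rewards collected
at step `h` by at most `(h + 1) ε`. Summing against `γ ^ h` gives
`∑ γ ^ h (h + 1) ε = ε / (1 - γ) ^ 2`, which the normalization `1 - γ` turns into `ε / (1 - γ)`.
The bound on `Q` is one more transition, weighted by `γ`.
-/

open Finset

lemma abs_sum_mul_le {ι : Type*} [Fintype ι] {w f : ι → ℝ} {M : ℝ} (hf : ∀ i, |f i| ≤ M) :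
    |∑ i, w i * f i| ≤ (∑ i, |w i|) * M := by
  rw [sum_mul]
  refine (abs_sum_le_sum_abs _ _).trans (sum_le_sum fun i _ => ?_)
  rw [abs_mul]
  exact mul_le_mul_of_nonneg_left (hf i) (abs_nonneg _)

lemma abs_sum_mul_sub_sum_mul_le {ι : Type*} [Fintype ι] {d d' f f' : ι → ℝ} {M δ : ℝ}
    (hf : ∀ i, |f i| ≤ M) (hff' : ∀ i, |f i - f' i| ≤ δ) :
    |∑ i, d i * f i - ∑ i, d' i * f' i| ≤
      (∑ i, |d i - d' i|) * M + (∑ i, |d' i|) * δ := by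
  have hsplit : ∑ i, d i * f i - ∑ i, d' i * f' i =
      ∑ i, (d i - d' i) * f i + ∑ i, d' i * (f i - f' i) := by
    rw [← sum_sub_distrib, ← sum_add_distrib]
    exact sum_congr rfl fun i _ => by ring
  rw [hsplit]
  exact (abs_add_le _ _).trans (add_le_add (abs_sum_mul_le hf) (abs_sum_mul_le hff'))

lemma hasSum_succ_mul_geometric {γ : ℝ} (hγ : |γ| < 1) :
    HasSum (fun h : ℕ => ((h : ℝ) + 1) * γ ^ h) (1 / (1 - γ) ^ 2) := by
  simpa using hasSum_choose_mul_geometric_of_norm_lt_one 1 (r := γ) hγ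

lemma abs_tsum_geometric_mul_sub_le {γ ε : ℝ} {a b : ℕ → ℝ} (hγ0 : 0 ≤ γ) (hγ1 : γ < 1)
    (ha : ∀ h, |a h| ≤ 1) (hb : ∀ h, |b h| ≤ 1) (hab : ∀ h, |a h - b h| ≤ (h + 1) * ε) :
    |∑' h, γ ^ h * a h - ∑' h, γ ^ h * b h| ≤ ε / (1 - γ) ^ 2 := by
  have hsummable : ∀ c : ℕ → ℝ, (∀ h, |c h| ≤ 1) → Summable fun h => γ ^ h * c h :=
    fun c hc => (summable_geometric_of_lt_one hγ0 hγ1).of_norm_bounded fun h => by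
      rw [Real.norm_eq_abs, abs_mul, abs_of_nonneg (pow_nonneg hγ0 h)]
      exact mul_le_of_le_one_right (pow_nonneg hγ0 h) (hc h)
  have hbound := (hasSum_succ_mul_geometric (abs_lt.2 ⟨by linarith, hγ1⟩)).mul_right ε
  rw [← (hsummable a ha).tsum_sub (hsummable b hb), ← Real.norm_eq_abs]
  refine (tsum_of_norm_bounded hbound fun h => ?_).trans_eq (by ring)
  rw [Real.norm_eq_abs, ← mul_sub, abs_mul, abs_of_nonneg (pow_nonneg hγ0 h)]
  calc γ ^ h * |a h - b h| ≤ γ ^ h * ((h + 1) * ε) :=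
        mul_le_mul_of_nonneg_left (hab h) (pow_nonneg hγ0 h)
    _ = (h + 1) * γ ^ h * ε := by ring

namespace Stmt2

lemma IsKernel.sum_abs {S A : Type*} [Fintype S] {P : S → A → S → ℝ} (hP : IsKernel P)
    (s : S) (a : A) : ∑ s', |P s a s'| = 1 := by
  simp [abs_of_nonneg (hP.1 s a _), hP.2 s a]

section

variable {S A : Type*} [Fintype A]

lemma IsPolicy.sum_abs {π : S → A → ℝ} (hπ : IsPolicy π) (s : S) : ∑ a, |π s a| = 1 := by
  simp [abs_of_nonneg (hπ.1 s _), hπ.2 s]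

lemma abs_sum_policy_mul_reward_le {π : S → A → ℝ} (hπ : IsPolicy π) {r : S → A → ℝ}
    (hr : ∀ s a, |r s a| ≤ 1) (s : S) : |∑ a, π s a * r s a| ≤ 1 := by
  simpa [hπ.sum_abs] using abs_sum_mul_le (w := π s) (hr s)

lemma abs_sum_policy_mul_reward_sub_le {π π' : S → A → ℝ} {r : S → A → ℝ}
    (hr : ∀ s a, |r s a| ≤ 1) (s : S) :
    |∑ a, π s a * r s a - ∑ a, π' s a * r s a| ≤ ∑ a, |π s a - π' s a| := by
  rw [← sum_sub_distrib]
  simp only [← sub_mul]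
  simpa using abs_sum_mul_le (w := fun a => π s a - π' s a) (hr s)

end

section

variable {S A : Type*} [Fintype S] [Fintype A]

lemma step_sub_step (P : S → A → S → ℝ) (π π' : S → A → ℝ) (d d' : S → ℝ) (s' : S) :
    step P π d s' - step P π' d' s' = step P π (d - d') s' + step P (π - π') d' s' := by
  simp only [step, Pi.sub_apply, ← sum_sub_distrib, ← sum_add_distrib]
  exact sum_congr rfl fun s _ => sum_congr rfl fun a _ => by ring

lemma step_nonneg {P : S → A → S → ℝ} {π : S → A → ℝ} {d : S → ℝ} (hP : IsKernel P)
    (hπ : IsPolicy π) (hd : ∀ s, 0 ≤ d s) (s' : S) : 0 ≤ step P π d s' :=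
  sum_nonneg fun s _ => sum_nonneg fun a _ =>
    mul_nonneg (mul_nonneg (hd s) (hπ.1 s a)) (hP.1 s a s')

lemma sum_step {P : S → A → S → ℝ} {π : S → A → ℝ} (hP : IsKernel P) (hπ : IsPolicy π)
    (d : S → ℝ) : ∑ s', step P π d s' = ∑ s, d s := by
  simp only [step]
  rw [sum_comm]
  refine sum_congr rfl fun s _ => ?_
  rw [sum_comm]
  simp only [← mul_sum, hP.2, mul_one, hπ.2]

lemma sum_abs_step_le {P : S → A → S → ℝ} (hP : IsKernel P) (ρ : S → A → ℝ) (d : S → ℝ) :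
    ∑ s', |step P ρ d s'| ≤ ∑ s, |d s| * ∑ a, |ρ s a| := by
  calc ∑ s', |step P ρ d s'|
      ≤ ∑ s', ∑ s, ∑ a, |d s * ρ s a| * P s a s' :=
        sum_le_sum fun s' _ => (abs_sum_le_sum_abs _ _).trans <| sum_le_sum fun s _ =>
          (abs_sum_le_sum_abs _ _).trans_eq <| sum_congr rfl fun a _ => by
            rw [abs_mul, abs_of_nonneg (hP.1 s a s')]
    _ = ∑ s, ∑ a, |d s * ρ s a| * ∑ s', P s a s' := by
        rw [sum_comm]
        refine sum_congr rfl fun s _ => ?_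
        rw [sum_comm]
        simp only [mul_sum]
    _ = ∑ s, |d s| * ∑ a, |ρ s a| := by
        simp only [hP.2, mul_one, abs_mul, mul_sum]

variable [DecidableEq S]

lemma dist_succ (P : S → A → S → ℝ) (π : S → A → ℝ) (s₀ : S) (h : ℕ) :
    dist P π s₀ (h + 1) = step P π (dist P π s₀ h) :=
  Function.iterate_succ_apply' _ _ _

lemma dist_nonneg {P : S → A → S → ℝ} {π : S → A → ℝ} (hP : IsKernel P) (hπ : IsPolicy π)
    (s₀ : S) (h : ℕ) (s : S) : 0 ≤ dist P π s₀ h s := by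
  induction h generalizing s with
  | zero => simp only [dist, Function.iterate_zero, id]; split <;> norm_num
  | succ h ih => rw [dist_succ]; exact step_nonneg hP hπ ih s

lemma sum_dist {P : S → A → S → ℝ} {π : S → A → ℝ} (hP : IsKernel P) (hπ : IsPolicy π)
    (s₀ : S) (h : ℕ) : ∑ s, dist P π s₀ h s = 1 := by
  induction h with
  | zero => simp [dist]
  | succ h ih => rw [dist_succ, sum_step hP hπ, ih]

lemma sum_abs_dist {P : S → A → S → ℝ} {π : S → A → ℝ} (hP : IsKernel P) (hπ : IsPolicy π)
    (s₀ : S) (h : ℕ) : ∑ s, |dist P π s₀ h s| = 1 := by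
  simp only [abs_of_nonneg (dist_nonneg hP hπ s₀ h _), sum_dist hP hπ]

variable {P : S → A → S → ℝ} {π π' : S → A → ℝ} {ε : ℝ}

lemma sum_abs_dist_sub_le (hP : IsKernel P) (hπ : IsPolicy π) (hπ' : IsPolicy π')
    (hε : ∀ s, ∑ a, |π s a - π' s a| ≤ ε) (s₀ : S) (h : ℕ) :
    ∑ s, |dist P π s₀ h s - dist P π' s₀ h s| ≤ h * ε := by
  induction h with
  | zero => simp [dist]
  | succ h ih =>
    set d := dist P π s₀ h
    set d' := dist P π' s₀ h
    have hdrift : ∑ s, |d' s| * ∑ a, |(π - π') s a| ≤ ε :=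
      calc ∑ s, |d' s| * ∑ a, |(π - π') s a| ≤ ∑ s, |d' s| * ε :=
            sum_le_sum fun s _ => mul_le_mul_of_nonneg_left (hε s) (abs_nonneg _)
        _ = ε := by rw [← sum_mul, sum_abs_dist hP hπ' s₀ h, one_mul]
    rw [dist_succ, dist_succ]
    calc ∑ s', |step P π d s' - step P π' d' s'|
        ≤ ∑ s', |step P π (d - d') s'| + ∑ s', |step P (π - π') d' s'| := by
          rw [← sum_add_distrib]
          exact sum_le_sum fun s' _ => by rw [step_sub_step]; exact abs_add_le _ _
      _ ≤ ∑ s, |d s - d' s| + ε := by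
          refine add_le_add ?_ ((sum_abs_step_le hP _ d').trans hdrift)
          simpa only [hπ.sum_abs, mul_one, Pi.sub_apply] using sum_abs_step_le hP π (d - d')
      _ ≤ (h + 1 : ℕ) * ε := by push_cast; linarith

lemma abs_val_sub_le {γ : ℝ} (hγ0 : 0 ≤ γ) (hγ1 : γ < 1) (hP : IsKernel P)
    (hπ : IsPolicy π) (hπ' : IsPolicy π') {r : S → A → ℝ} (hr : ∀ s a, |r s a| ≤ 1)
    (hε : ∀ s, ∑ a, |π s a - π' s a| ≤ ε) (s₀ : S) :
    |val γ P π r s₀ - val γ P π' r s₀| ≤ ε / (1 - γ) := by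
  have hγ : 0 < 1 - γ := by linarith
  have hreward : ∀ (ρ : S → A → ℝ), IsPolicy ρ → ∀ h : ℕ,
      |∑ s, dist P ρ s₀ h s * ∑ a, ρ s a * r s a| ≤ 1 := fun ρ hρ h => by
    simpa [sum_abs_dist hP hρ] using
      abs_sum_mul_le (w := dist P ρ s₀ h) (abs_sum_policy_mul_reward_le hρ hr)
  have hstage : ∀ h : ℕ, |∑ s, dist P π s₀ h s * ∑ a, π s a * r s a -
      ∑ s, dist P π' s₀ h s * ∑ a, π' s a * r s a| ≤ (h + 1) * ε := fun h => by
    have hsplit := abs_sum_mul_sub_sum_mul_le (d := dist P π s₀ h) (d' := dist P π' s₀ h)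
      (abs_sum_policy_mul_reward_le hπ hr)
      (fun s => (abs_sum_policy_mul_reward_sub_le hr s).trans (hε s))
    rw [sum_abs_dist hP hπ'] at hsplit
    linarith [sum_abs_dist_sub_le hP hπ hπ' hε s₀ h]
  rw [val, val, ← mul_sub, abs_mul, abs_of_pos hγ]
  calc (1 - γ) * |_| ≤ (1 - γ) * (ε / (1 - γ) ^ 2) :=
        mul_le_mul_of_nonneg_left (abs_tsum_geometric_mul_sub_le hγ0 hγ1 (hreward π hπ)
          (hreward π' hπ') hstage) hγ.le
    _ = ε / (1 - γ) := by field_simp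

lemma qval_sub_qval (γ : ℝ) (P : S → A → S → ℝ) (r : S → A → ℝ) (s : S) (a : A) :
    qval γ P π r s a - qval γ P π' r s a =
      γ * ∑ s', P s a s' * (val γ P π r s' - val γ P π' r s') := by
  simp only [qval, mul_sub, sum_sub_distrib]
  ring

end

variable {S A I : Type*} [Fintype S] [Fintype A] [DecidableEq S] [Nonempty S]

/-- Lipschitz continuity of the (normalized) value and action-value functions in the policy:
`|V_i^π(s) - V_i^{π'}(s)| ≤ (1/(1-γ)) · max_{s'} ‖π(·|s') - π'(·|s')‖₁` and
`|Q_i^π(s,a) - Q_i^{π'}(s,a)| ≤ (γ/(1-γ)) · max_{s'} ‖π(·|s') - π'(·|s')‖₁`. -/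
theorem value_lipschitz_in_policy (γ : ℝ) (hγ0 : 0 ≤ γ) (hγ1 : γ < 1)
    (P : S → A → S → ℝ) (hP : IsKernel P)
    (π π' : S → A → ℝ) (hπ : IsPolicy π) (hπ' : IsPolicy π')
    (r : I → S → A → ℝ) (hr : ∀ i s a, |r i s a| ≤ 1)
    (s : S) (i : I) :
    (|val γ P π (r i) s - val γ P π' (r i) s| ≤
        (1 / (1 - γ)) * (⨆ s' : S, ∑ a, |π s' a - π' s' a|)) ∧
    ∀ a : A, |qval γ P π (r i) s a - qval γ P π' (r i) s a| ≤
        (γ / (1 - γ)) * (⨆ s' : S, ∑ a', |π s' a' - π' s' a'|) := by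
  set ε := ⨆ s' : S, ∑ a, |π s' a - π' s' a|
  have hε : ∀ s', ∑ a, |π s' a - π' s' a| ≤ ε :=
    le_ciSup (Set.finite_range fun s' => ∑ a, |π s' a - π' s' a|).bddAbove
  have hV : ∀ s', |val γ P π (r i) s' - val γ P π' (r i) s'| ≤ ε / (1 - γ) :=
    abs_val_sub_le hγ0 hγ1 hP hπ hπ' (hr i) hε
  refine ⟨(hV s).trans_eq (by ring), fun a => ?_⟩
  rw [qval_sub_qval, abs_mul, abs_of_nonneg hγ0]
  calc γ * |∑ s', P s a s' * (val γ P π (r i) s' - val γ P π' (r i) s')|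
      ≤ γ * ((∑ s', |P s a s'|) * (ε / (1 - γ))) :=
        mul_le_mul_of_nonneg_left (abs_sum_mul_le hV) hγ0
    _ = γ / (1 - γ) * ε := by rw [hP.sum_abs]; ring

end Stmt2
end

section
/- Let π be a product policy of a γ-discounted stochastic game in which at each state all but p players have a singleton action set, and suppose π is an ε-PNE-SG. Then the truncated policy π' — obtained by restricting each π_i(·|s) to actions a_i with Q_i^π(s,a_i) ≥ max_{a_i'} Q_i^π(s,a_i') - k·ρ_{i,s} for k = sqrt(8p/((1-γ)ε)) and renormalizing — is a 6·sqrt(pε/(1-γ))-perfect well-supported NE in stage games. -/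
open scoped BigOperators

namespace Stmt5

variable {S : Type*} [Fintype S] [DecidableEq S]
variable {m : ℕ} {A : Fin m → Type*} [∀ i, Fintype (A i)] [∀ i, Nonempty (A i)]

def IsKernel {α : Type*} [Fintype α] (P : S → α → S → ℝ) : Prop :=
  (∀ s a s', 0 ≤ P s a s') ∧ ∀ s a, ∑ s', P s a s' = 1

def IsPolicy {α : Type*} [Fintype α] (π : S → α → ℝ) : Prop :=
  (∀ s a, 0 ≤ π s a) ∧ ∀ s, ∑ a, π s a = 1

noncomputable def step {α : Type*} [Fintype α] (P : S → α → S → ℝ) (π : S → α → ℝ)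
    (d : S → ℝ) : S → ℝ :=
  fun s' => ∑ s, ∑ a, d s * π s a * P s a s'

noncomputable def dist {α : Type*} [Fintype α] (P : S → α → S → ℝ) (π : S → α → ℝ)
    (s₀ : S) (h : ℕ) : S → ℝ :=
  (step P π)^[h] (fun s => if s = s₀ then (1 : ℝ) else 0)

/-- Normalized discounted value `V^π(s₀) = (1-γ)·E[Σ_{h≥1} γ^{h-1} r(s_h,a_h)]`. -/
noncomputable def val (γ : ℝ) {α : Type*} [Fintype α] (P : S → α → S → ℝ) (π : S → α → ℝ)
    (r : S → α → ℝ) (s₀ : S) : ℝ :=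
  (1 - γ) * ∑' h : ℕ, γ ^ h * ∑ s, dist P π s₀ h s * ∑ a, π s a * r s a

/-- Normalized discounted action-value `Q^π(s,a)`. -/
noncomputable def qval (γ : ℝ) {α : Type*} [Fintype α] (P : S → α → S → ℝ) (π : S → α → ℝ)
    (r : S → α → ℝ) (s : S) (a : α) : ℝ :=
  (1 - γ) * r s a + γ * ∑ s', P s a s' * val γ P π r s'

/-- The joint (product) policy induced by a tuple of per-player policies. -/
noncomputable def prodPolicy (πp : ∀ i : Fin m, S → A i → ℝ) : S → (∀ i, A i) → ℝ :=
  fun s a => ∏ i, πp i s (a i)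

/-- `Qbar γ P πp r i s aᵢ = E_{a₋ᵢ ~ π₋ᵢ(s)}[Q_i^π(s, (aᵢ, a₋ᵢ))]` for the product policy `πp`
(using that `πp i s` sums to one, averaging the `i`-th coordinate out is harmless). -/
noncomputable def Qbar (γ : ℝ) (P : S → (∀ i, A i) → S → ℝ) (πp : ∀ i : Fin m, S → A i → ℝ)
    (r : S → (∀ i, A i) → ℝ) (i : Fin m) (s : S) (aᵢ : A i) : ℝ :=
  ∑ a : ∀ j, A j, prodPolicy πp s a * qval γ P (prodPolicy πp) r s (Function.update a i aᵢ)

/-- Best-response value `V_i^{†,π₋ᵢ}(s)` of player `i` against the product policy `πp`: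
the supremum over stationary policies of player `i` of the resulting value. -/
noncomputable def brVal (γ : ℝ) (P : S → (∀ i, A i) → S → ℝ) (πp : ∀ i : Fin m, S → A i → ℝ)
    (r : S → (∀ i, A i) → ℝ) (i : Fin m) (s : S) : ℝ :=
  ⨆ ρ : {ρ : S → A i → ℝ // IsPolicy ρ},
    val γ P (prodPolicy (Function.update πp i ρ.1)) r s

/-- The stage-game improvement `ρ_{i,s}` of player `i` at state `s` under product policy `πp`. -/
noncomputable def stageGap (γ : ℝ) (P : S → (∀ i, A i) → S → ℝ) (πp : ∀ i : Fin m, S → A i → ℝ)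
    (r : S → (∀ i, A i) → ℝ) (i : Fin m) (s : S) : ℝ :=
  (⨆ aᵢ : A i, Qbar γ P πp r i s aᵢ) - val γ P (prodPolicy πp) r s

open Classical in
/-- The truncated policy: restrict `πp i (·|s)` to actions `aᵢ` with
`Qbar(s,aᵢ) ≥ max_{aᵢ'} Qbar(s,aᵢ') - k·ρ_{i,s}` and renormalize. -/
noncomputable def truncPolicy (γ : ℝ) (P : S → (∀ i, A i) → S → ℝ)
    (πp : ∀ i : Fin m, S → A i → ℝ) (r : Fin m → S → (∀ i, A i) → ℝ) (k : ℝ) :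
    ∀ i : Fin m, S → A i → ℝ :=
  fun i s aᵢ =>
    if (⨆ aᵢ' : A i, Qbar γ P πp (r i) i s aᵢ') - k * stageGap γ P πp (r i) i s
        ≤ Qbar γ P πp (r i) i s aᵢ
    then πp i s aᵢ /
      (∑ a' ∈ Finset.univ.filter (fun a' : A i =>
          (⨆ aᵢ' : A i, Qbar γ P πp (r i) i s aᵢ') - k * stageGap γ P πp (r i) i s
            ≤ Qbar γ P πp (r i) i s a'), πp i s a')
    else 0

/-!
By Markov's inequality, the actions whose suboptimality `⨆ Qbar - Qbar` exceeds `k ρ` carry at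
most `1 / k` of player `i`'s mass, the mean suboptimality being the stage gap `ρ`. Truncation
therefore moves each nontrivial player's policy by at most `2 / k` in total variation, the
product policy by at most `2 p / k`, and, by the simulation lemma, every averaged action value
`Qbar` by at most `δ = 2 p / (k (1 - γ))`. A supported action of the truncated policy was within
`k ρ ≤ k ε` of the best one before truncation, so afterwards the spread is at most
`k ε + 2 δ`, which for `k = √(8 p / ((1 - γ) ε))` equals `3 k ε / 2 ≤ 6 √(p ε / (1 - γ))`. When
`k ≤ 1` the bound is at least `2`, and values lie in `[-1, 1]`.
-/

section FiniteSums

variable {ι : Type*} [Fintype ι] {w w' f f' : ι → ℝ} {c : ℝ}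

lemma abs_sum_mul_le (hw : ∀ x, 0 ≤ w x) (hw1 : ∑ x, w x ≤ 1) (hc : 0 ≤ c)
    (hf : ∀ x, |f x| ≤ c) : |∑ x, w x * f x| ≤ c :=
  calc |∑ x, w x * f x| ≤ ∑ x, w x * c := by
        refine (Finset.abs_sum_le_sum_abs _ _).trans (Finset.sum_le_sum fun x _ => ?_)
        rw [abs_mul, abs_of_nonneg (hw x)]
        exact mul_le_mul_of_nonneg_left (hf x) (hw x)
    _ = (∑ x, w x) * c := Finset.sum_mul _ _ _ |>.symm
    _ ≤ c := mul_le_of_le_one_left hc hw1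

lemma abs_sum_sub_mul_le (hf : ∀ x, |f x| ≤ 1) :
    |∑ x, (w' x - w x) * f x| ≤ ∑ x, |w' x - w x| := by
  refine (Finset.abs_sum_le_sum_abs _ _).trans (Finset.sum_le_sum fun x _ => ?_)
  rw [abs_mul]
  exact mul_le_of_le_one_right (abs_nonneg _) (hf x)

lemma abs_sum_mul_sub_sum_mul_le (hw : ∀ x, 0 ≤ w x) (hw1 : ∑ x, w x ≤ 1)
    (hf' : ∀ x, |f' x| ≤ 1) (hc : 0 ≤ c) (hff' : ∀ x, |f' x - f x| ≤ c) :
    |∑ x, w' x * f' x - ∑ x, w x * f x| ≤ ∑ x, |w' x - w x| + c := by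
  have hsplit : ∑ x, w' x * f' x - ∑ x, w x * f x
      = ∑ x, (w' x - w x) * f' x + ∑ x, w x * (f' x - f x) := by
    rw [← Finset.sum_sub_distrib, ← Finset.sum_add_distrib]
    exact Finset.sum_congr rfl fun x _ => by ring
  rw [hsplit]
  exact (abs_add_le _ _).trans (add_le_add (abs_sum_sub_mul_le hf') (abs_sum_mul_le hw hw1 hc hff'))

end FiniteSums

section ProductDistance

variable {ι : Type*} [Fintype ι] [DecidableEq ι] {B : ι → Type*} [∀ i, Fintype (B i)]

omit [∀ i, Fintype (B i)] in
lemma prod_update_apply (v : ∀ i, B i → ℝ) (j : ι) (z : B j → ℝ) (a : ∀ i, B i) :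
    ∏ i, Function.update v j z i (a i) = z (a j) * ∏ i ∈ Finset.univ.erase j, v i (a i) := by
  rw [← Finset.mul_prod_erase _ _ (Finset.mem_univ j), Function.update_self]
  congr 1
  exact Finset.prod_congr rfl fun i hi => by
    rw [Function.update_of_ne (Finset.ne_of_mem_erase hi)]

lemma sum_abs_prod_update_sub_le {v : ∀ i, B i → ℝ} (hv0 : ∀ i b, 0 ≤ v i b)
    (hv1 : ∀ i, ∑ b, v i b ≤ 1) (j : ι) (x y : B j → ℝ) :
    ∑ a : ∀ i, B i, |∏ i, Function.update v j x i (a i) - ∏ i, Function.update v j y i (a i)|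
      ≤ ∑ b, |x b - y b| := by
  calc ∑ a : ∀ i, B i, |∏ i, Function.update v j x i (a i) - ∏ i, Function.update v j y i (a i)|
      = ∑ a : ∀ i, B i, ∏ i, Function.update v j (fun b => |x b - y b|) i (a i) := by
        refine Finset.sum_congr rfl fun a _ => ?_
        rw [prod_update_apply, prod_update_apply, prod_update_apply, ← sub_mul, abs_mul,
          abs_of_nonneg (Finset.prod_nonneg fun i _ => hv0 i (a i))]
    _ = (∑ b, |x b - y b|) * ∏ i ∈ Finset.univ.erase j, ∑ b, v i b := by
        rw [← Fintype.prod_sum, ← Finset.mul_prod_erase _ _ (Finset.mem_univ j),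
          Function.update_self]
        congr 1
        exact Finset.prod_congr rfl fun i hi => by
          rw [Function.update_of_ne (Finset.ne_of_mem_erase hi)]
    _ ≤ ∑ b, |x b - y b| :=
        mul_le_of_le_one_right (Finset.sum_nonneg fun b _ => abs_nonneg _)
          (Finset.prod_le_one (fun i _ => Finset.sum_nonneg fun b _ => hv0 i b) fun i _ => hv1 i)

lemma sum_abs_prod_sub_prod_le {f g : ∀ i, B i → ℝ} (hf0 : ∀ i b, 0 ≤ f i b)
    (hf1 : ∀ i, ∑ b, f i b ≤ 1) (hg0 : ∀ i b, 0 ≤ g i b) (hg1 : ∀ i, ∑ b, g i b ≤ 1) :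
    ∑ a : ∀ i, B i, |∏ i, g i (a i) - ∏ i, f i (a i)| ≤ ∑ i, ∑ b, |g i b - f i b| := by
  -- hybrid argument: replace the factors `f i` by `g i` one player at a time
  suffices h : ∀ t : Finset ι, ∑ a : ∀ i, B i,
      |∏ i, (if i ∈ t then g i else f i) (a i) - ∏ i, f i (a i)| ≤ ∑ i ∈ t, ∑ b, |g i b - f i b| by
    simpa using h Finset.univ
  intro t
  induction t using Finset.induction_on with
  | empty => simp
  | insert j t hj ih =>
    set v : ∀ i, B i → ℝ := fun i => if i ∈ t then g i else f i
    have hv0 : ∀ i b, 0 ≤ v i b := fun i b => by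
      simp only [v]; split_ifs <;> simp [hf0, hg0]
    have hv1 : ∀ i, ∑ b, v i b ≤ 1 := fun i => by
      simp only [v]; split_ifs <;> simp [hf1, hg1]
    have hnew : ∀ i, (if i ∈ insert j t then g i else f i) = Function.update v j (g j) i := by
      intro i
      by_cases hij : i = j
      · subst hij; simp
      · simp [v, hij]
    have hold : Function.update v j (f j) = v := by
      funext i
      by_cases hij : i = j
      · subst hij; simp [v, hj]
      · rw [Function.update_of_ne hij]
    have hstep := sum_abs_prod_update_sub_le hv0 hv1 j (g j) (f j)
    rw [hold] at hstep
    calc ∑ a : ∀ i, B i,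
          |∏ i, (if i ∈ insert j t then g i else f i) (a i) - ∏ i, f i (a i)|
        ≤ ∑ a : ∀ i, B i, (|∏ i, Function.update v j (g j) i (a i) - ∏ i, v i (a i)|
            + |∏ i, v i (a i) - ∏ i, f i (a i)|) := by
          simp only [hnew]
          exact Finset.sum_le_sum fun a _ => abs_sub_le _ _ _
      _ ≤ ∑ b, |g j b - f j b| + ∑ i ∈ t, ∑ b, |g i b - f i b| := by
          rw [Finset.sum_add_distrib]
          exact add_le_add hstep ih
      _ = ∑ i ∈ insert j t, ∑ b, |g i b - f i b| := by rw [Finset.sum_insert hj]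

end ProductDistance

section Truncation

variable {α : Type*} [Fintype α] {π Q X : α → ℝ} {c k : ℝ}

lemma sum_filter_mul_lt_le (hπ : ∀ a, 0 ≤ π a) (hX : ∀ a, 0 ≤ X a) (hk : 0 < k) :
    ∑ a ∈ Finset.univ.filter (fun a => k * ∑ b, π b * X b < X a), π a ≤ 1 / k := by
  set E := ∑ b, π b * X b
  have hmass : ∀ a ∈ Finset.univ.filter (fun a => k * E < X a), π a * (k * E) ≤ π a * X a :=
    fun a ha => mul_le_mul_of_nonneg_left (Finset.mem_filter.mp ha).2.le (hπ a)
  have htail : ∑ a ∈ Finset.univ.filter (fun a => k * E < X a), π a * X a ≤ E :=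
    Finset.sum_le_sum_of_subset_of_nonneg (Finset.filter_subset _ _)
      fun a _ _ => mul_nonneg (hπ a) (hX a)
  have hE0 : 0 ≤ E := Finset.sum_nonneg fun b _ => mul_nonneg (hπ b) (hX b)
  rcases hE0.eq_or_lt with hE | hE
  · refine le_of_eq_of_le (Finset.sum_eq_zero fun a ha => ?_) (by positivity)
    have hXa : 0 < X a := by simpa [← hE] using (Finset.mem_filter.mp ha).2
    have : π a * X a = 0 := le_antisymm ((Finset.single_le_sum (fun b _ => mul_nonneg (hπ b)
      (hX b)) ha).trans (hE ▸ htail)) (mul_nonneg (hπ a) (hX a))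
    exact (mul_eq_zero.mp this).resolve_right hXa.ne'
  · rw [le_div_iff₀ hk, ← mul_le_mul_iff_of_pos_right hE, one_mul, mul_assoc, Finset.sum_mul]
    exact (Finset.sum_le_sum hmass).trans htail

open Classical in
/-- When the kept actions carry no mass this is the zero function (`x / 0 = 0`), which is why
truncated policies are in general only sub-policies. -/
noncomputable def truncate (π Q : α → ℝ) (c : ℝ) : α → ℝ :=
  fun a => if c ≤ Q a then π a / ∑ a' ∈ Finset.univ.filter (fun a' => c ≤ Q a'), π a' else 0

lemma truncate_nonneg (hπ : ∀ a, 0 ≤ π a) (a : α) : 0 ≤ truncate π Q c a := by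
  unfold truncate
  split_ifs
  · exact div_nonneg (hπ a) (Finset.sum_nonneg fun b _ => hπ b)
  · exact le_rfl

lemma le_of_truncate_pos {a : α} (h : 0 < truncate π Q c a) : c ≤ Q a := by
  by_contra hc
  simp [truncate, hc] at h

omit [Fintype α] in
lemma sum_filter_le_add_sum_filter_lt (s : Finset α) (π Q : α → ℝ) (c : ℝ) :
    ∑ a ∈ s.filter (fun a => c ≤ Q a), π a + ∑ a ∈ s.filter (fun a => Q a < c), π a
      = ∑ a ∈ s, π a := by
  simpa only [not_le] using Finset.sum_filter_add_sum_filter_not s (fun a => c ≤ Q a) π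

lemma sum_truncate :
    ∑ a, truncate π Q c a = (∑ a ∈ Finset.univ.filter (fun a => c ≤ Q a), π a)
      / ∑ a ∈ Finset.univ.filter (fun a => c ≤ Q a), π a := by
  simp only [truncate]
  rw [← Finset.sum_filter, Finset.sum_div]

lemma sum_truncate_le_one : ∑ a, truncate π Q c a ≤ 1 :=
  sum_truncate.trans_le (div_self_le_one _)

lemma sum_truncate_eq_one (h : ∑ a ∈ Finset.univ.filter (fun a => c ≤ Q a), π a ≠ 0) :
    ∑ a, truncate π Q c a = 1 :=
  sum_truncate.trans (div_self h)

lemma truncate_eq_self (hπ : ∑ a, π a = 1) (h : ∀ a, c ≤ Q a) : truncate π Q c = π := by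
  funext a
  simp [truncate, h, hπ]

lemma sum_abs_truncate_sub (hπ0 : ∀ a, 0 ≤ π a) (hπ1 : ∑ a, π a = 1)
    (hden : 0 < ∑ a ∈ Finset.univ.filter (fun a => c ≤ Q a), π a) :
    ∑ a, |truncate π Q c a - π a| = 2 * ∑ a ∈ Finset.univ.filter (fun a => Q a < c), π a := by
  set den := ∑ a ∈ Finset.univ.filter (fun a => c ≤ Q a), π a
  have hsplit : den + ∑ a ∈ Finset.univ.filter (fun a => Q a < c), π a = 1 :=
    (sum_filter_le_add_sum_filter_lt _ π Q c).trans hπ1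
  have hden1 : den ≤ 1 := by
    linarith [Finset.sum_nonneg fun a (_ : a ∈ Finset.univ.filter (fun a => Q a < c)) => hπ0 a]
  have hkept : ∑ a ∈ Finset.univ.filter (fun a => c ≤ Q a), |truncate π Q c a - π a|
      = ∑ a ∈ Finset.univ.filter (fun a => c ≤ Q a), (π a / den - π a) := by
    refine Finset.sum_congr rfl fun a ha => ?_
    rw [truncate, if_pos (Finset.mem_filter.mp ha).2, abs_of_nonneg]
    rw [sub_nonneg, le_div_iff₀ hden]
    exact mul_le_of_le_one_right (hπ0 a) hden1
  have hdropped : ∑ a ∈ Finset.univ.filter (fun a => ¬c ≤ Q a), |truncate π Q c a - π a|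
      = ∑ a ∈ Finset.univ.filter (fun a => Q a < c), π a := by
    simp only [not_le]
    refine Finset.sum_congr rfl fun a ha => ?_
    rw [truncate, if_neg (not_le.mpr (Finset.mem_filter.mp ha).2), zero_sub, abs_neg,
      abs_of_nonneg (hπ0 a)]
  rw [← Finset.sum_filter_add_sum_filter_not Finset.univ (fun a => c ≤ Q a), hkept, hdropped,
    Finset.sum_sub_distrib, ← Finset.sum_div, div_self hden.ne']
  linarith

end Truncation

section Spread

variable {α : Type*} {f : α → ℝ} {q : α → Prop}

lemma iSup_sub_iInf_subtype_le [Finite α] [Nonempty {a // q a}] {U L : ℝ}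
    (hU : ∀ a, f a ≤ U) (hL : ∀ a, q a → L ≤ f a) :
    (⨆ a, f a) - ⨅ a : {a // q a}, f a ≤ U - L :=
  have : Nonempty α := Nonempty.map Subtype.val ‹_›
  sub_le_sub (ciSup_le hU) (le_ciInf fun a => hL a.1 a.2)

lemma iSup_sub_iInf_subtype_nonpos [Subsingleton α] [Nonempty {a // q a}] :
    (⨆ a, f a) - ⨅ a : {a // q a}, f a ≤ 0 := by
  have : Finite α := Finite.of_subsingleton
  obtain ⟨⟨a₀, -⟩⟩ := ‹Nonempty {a // q a}›
  simpa using iSup_sub_iInf_subtype_le (U := f a₀) (L := f a₀) (f := f) (q := q)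
    (fun a => (congrArg f (Subsingleton.elim a a₀)).le)
    (fun a _ => (congrArg f (Subsingleton.elim a₀ a)).le)

lemma nonempty_pos_of_sum_eq_one [Fintype α] {w : α → ℝ} (h : ∑ a, w a = 1) :
    Nonempty {a // 0 < w a} := by
  obtain ⟨a, -, ha⟩ := Finset.exists_lt_of_sum_lt (f := fun _ => (0 : ℝ)) (g := w)
    (s := Finset.univ) (by simp [h])
  exact ⟨⟨a, ha⟩⟩

end Spread

lemma mul_add_div_le_six_mul_sqrt {u e p : ℝ} (hu : 0 < u) (he : 0 < e) (hp : 0 < p) :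
    √(8 * p / (u * e)) * e + 4 * p / (√(8 * p / (u * e)) * u) ≤ 6 * √(p * e / u) := by
  set k := √(8 * p / (u * e))
  have hk : 0 < k := Real.sqrt_pos.mpr (by positivity)
  have hk2 : k ^ 2 * (u * e) = 8 * p := by
    rw [Real.sq_sqrt (by positivity), div_mul_cancel₀ _ (by positivity)]
  have hhalf : 4 * p / (k * u) = k * e / 2 := by
    rw [div_eq_div_iff (by positivity) two_ne_zero]
    linear_combination -hk2
  have hsqrt : k * e / 4 ≤ √(p * e / u) := by
    rw [Real.le_sqrt (by positivity) (by positivity), le_div_iff₀ hu]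
    nlinarith [hk2, mul_pos hk he]
  rw [hhalf]
  linarith

lemma two_le_six_mul_sqrt {u e p : ℝ} (hu : 0 < u) (hu1 : u ≤ 1) (he : 0 < e) (hp : 1 ≤ p)
    (hk : √(8 * p / (u * e)) ≤ 1) : 2 ≤ 6 * √(p * e / u) := by
  have h8 : 8 * p ≤ u * e := by
    rwa [Real.sqrt_le_one, div_le_one (by positivity)] at hk
  have hX : 1 / 9 ≤ p * e / u := by
    rw [le_div_iff₀ hu]
    nlinarith [mul_le_mul_of_nonneg_right hu1 he.le]
  have : 1 / 3 ≤ √(p * e / u) := by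
    rw [Real.le_sqrt (by norm_num) (by positivity)]
    linarith
  linarith

def IsSubPolicy {α : Type*} [Fintype α] (π : S → α → ℝ) : Prop :=
  (∀ s a, 0 ≤ π s a) ∧ ∀ s, ∑ a, π s a ≤ 1

omit [Fintype S] [DecidableEq S] in
lemma IsPolicy.isSubPolicy {α : Type*} [Fintype α] {π : S → α → ℝ} (h : IsPolicy π) :
    IsSubPolicy π :=
  ⟨h.1, fun s => (h.2 s).le⟩

section Dynamics

variable {α : Type*} [Fintype α] {γ : ℝ} {P : S → α → S → ℝ} {π : S → α → ℝ}
  {r : S → α → ℝ}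

section Step

omit [DecidableEq S]
variable (hP : IsKernel P) (hπ : IsSubPolicy π)
include hP hπ

lemma step_nonneg {d : S → ℝ} (hd : ∀ s, 0 ≤ d s) (s' : S) : 0 ≤ step P π d s' :=
  Finset.sum_nonneg fun s _ => Finset.sum_nonneg fun a _ =>
    mul_nonneg (mul_nonneg (hd s) (hπ.1 s a)) (hP.1 s a s')

lemma sum_step_le {d : S → ℝ} (hd : ∀ s, 0 ≤ d s) : ∑ s', step P π d s' ≤ ∑ s, d s := by
  calc ∑ s', step P π d s' = ∑ s, d s * ∑ a, π s a := by
        simp only [step]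
        rw [Finset.sum_comm]
        refine Finset.sum_congr rfl fun s _ => ?_
        rw [Finset.sum_comm, Finset.mul_sum]
        refine Finset.sum_congr rfl fun a _ => ?_
        rw [← Finset.mul_sum, hP.2 s a, mul_one]
    _ ≤ ∑ s, d s := Finset.sum_le_sum fun s _ => mul_le_of_le_one_right (hd s) (hπ.2 s)

end Step

lemma dist_succ_eq_step (s₀ : S) (h : ℕ) :
    dist P π s₀ (h + 1) = step P π (dist P π s₀ h) :=
  Function.iterate_succ_apply' _ _ _

lemma iterate_step_apply (h : ℕ) (d : S → ℝ) (s' : S) :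
    (step P π)^[h] d s' = ∑ s₀, d s₀ * dist P π s₀ h s' := by
  induction h generalizing s' with
  | zero => simp [dist]
  | succ h ih =>
    simp only [Function.iterate_succ_apply', dist_succ_eq_step, step, ih, Finset.mul_sum,
      Finset.sum_mul, mul_assoc]
    conv_lhs => enter [2, s]; rw [Finset.sum_comm]
    rw [Finset.sum_comm]

lemma dist_succ (s₀ : S) (h : ℕ) (s' : S) :
    dist P π s₀ (h + 1) s' = ∑ s₁, (∑ a, π s₀ a * P s₀ a s₁) * dist P π s₁ h s' := by
  rw [dist, Function.iterate_succ_apply, iterate_step_apply]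
  congr! 2 with s₁
  simp [step]

lemma sum_dist_succ_mul (s₀ : S) (h : ℕ) (g : S → ℝ) :
    ∑ s, dist P π s₀ (h + 1) s * g s
      = ∑ s₁, (∑ a, π s₀ a * P s₀ a s₁) * ∑ s, dist P π s₁ h s * g s := by
  simp only [dist_succ, Finset.sum_mul, Finset.mul_sum, mul_assoc]
  rw [Finset.sum_comm]

lemma dist_nonneg (hP : IsKernel P) (hπ : IsSubPolicy π) (s₀ : S) (h : ℕ) (s : S) :
    0 ≤ dist P π s₀ h s := by
  induction h generalizing s with
  | zero => simp only [dist, Function.iterate_zero_apply]; positivity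
  | succ h ih => rw [dist_succ_eq_step]; exact step_nonneg hP hπ ih s

lemma sum_dist_le_one (hP : IsKernel P) (hπ : IsSubPolicy π) (s₀ : S) (h : ℕ) :
    ∑ s, dist P π s₀ h s ≤ 1 := by
  induction h with
  | zero => simp [dist]
  | succ h ih =>
    rw [dist_succ_eq_step]
    exact (sum_step_le hP hπ (dist_nonneg hP hπ s₀ h)).trans ih

noncomputable def expectedReward (P : S → α → S → ℝ) (π : S → α → ℝ) (r : S → α → ℝ) (s₀ : S)
    (h : ℕ) : ℝ :=
  ∑ s, dist P π s₀ h s * ∑ a, π s a * r s a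

lemma val_eq_tsum (s₀ : S) :
    val γ P π r s₀ = (1 - γ) * ∑' h, γ ^ h * expectedReward P π r s₀ h :=
  rfl

lemma expectedReward_zero (s₀ : S) : expectedReward P π r s₀ 0 = ∑ a, π s₀ a * r s₀ a := by
  simp [expectedReward, dist]

lemma expectedReward_succ (s₀ : S) (h : ℕ) :
    expectedReward P π r s₀ (h + 1)
      = ∑ s₁, (∑ a, π s₀ a * P s₀ a s₁) * expectedReward P π r s₁ h :=
  sum_dist_succ_mul s₀ h _

lemma abs_expectedReward_le_one (hP : IsKernel P) (hπ : IsSubPolicy π)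
    (hr : ∀ s a, |r s a| ≤ 1) (s₀ : S) (h : ℕ) : |expectedReward P π r s₀ h| ≤ 1 :=
  abs_sum_mul_le (dist_nonneg hP hπ s₀ h) (sum_dist_le_one hP hπ s₀ h) zero_le_one
    fun s => abs_sum_mul_le (hπ.1 s) (hπ.2 s) zero_le_one (hr s)

lemma abs_discounted_expectedReward_le (hγ0 : 0 ≤ γ) (hP : IsKernel P) (hr : ∀ s a, |r s a| ≤ 1)
    (hπ : IsSubPolicy π) (s₀ : S) (h : ℕ) :
    |γ ^ h * expectedReward P π r s₀ h| ≤ γ ^ h := by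
  rw [abs_mul, abs_of_nonneg (pow_nonneg hγ0 h)]
  exact mul_le_of_le_one_right (pow_nonneg hγ0 h) (abs_expectedReward_le_one hP hπ hr s₀ h)

variable (hγ0 : 0 ≤ γ) (hγ1 : γ < 1) (hP : IsKernel P) (hr : ∀ s a, |r s a| ≤ 1)
include hγ0 hγ1 hP hr

lemma summable_discounted_expectedReward (hπ : IsSubPolicy π) (s₀ : S) :
    Summable fun h => γ ^ h * expectedReward P π r s₀ h :=
  Summable.of_norm_bounded (summable_geometric_of_lt_one hγ0 hγ1)
    (abs_discounted_expectedReward_le hγ0 hP hr hπ s₀)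

lemma abs_val_le_one (hπ : IsSubPolicy π) (s₀ : S) : |val γ P π r s₀| ≤ 1 := by
  have h1γ : 0 < 1 - γ := sub_pos.mpr hγ1
  have htsum : |∑' h, γ ^ h * expectedReward P π r s₀ h| ≤ (1 - γ)⁻¹ := by
    rw [← tsum_geometric_of_lt_one hγ0 hγ1]
    exact (norm_tsum_le_tsum_norm
      (summable_discounted_expectedReward hγ0 hγ1 hP hr hπ s₀).norm).trans
      (Summable.tsum_le_tsum (abs_discounted_expectedReward_le hγ0 hP hr hπ s₀)
        (summable_discounted_expectedReward hγ0 hγ1 hP hr hπ s₀).norm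
        (summable_geometric_of_lt_one hγ0 hγ1))
  rw [val_eq_tsum, abs_mul, abs_of_pos h1γ]
  calc (1 - γ) * |∑' h, γ ^ h * expectedReward P π r s₀ h| ≤ (1 - γ) * (1 - γ)⁻¹ :=
        mul_le_mul_of_nonneg_left htsum h1γ.le
    _ = 1 := mul_inv_cancel₀ h1γ.ne'

lemma val_eq_sum_qval (hπ : IsSubPolicy π) (s : S) :
    val γ P π r s = ∑ a, π s a * qval γ P π r s a := by
  have hshift : ∑' h, γ ^ (h + 1) * expectedReward P π r s (h + 1)
      = γ * ∑ s₁, (∑ a, π s a * P s a s₁) * ∑' h, γ ^ h * expectedReward P π r s₁ h := by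
    simp only [expectedReward_succ, Finset.mul_sum, pow_succ]
    rw [Summable.tsum_finsetSum fun s₁ _ =>
      ((summable_discounted_expectedReward hγ0 hγ1 hP hr hπ s₁).mul_left
        (γ * ∑ a, π s a * P s a s₁)).congr fun h => by ring]
    refine Finset.sum_congr rfl fun s₁ _ => ?_
    rw [← tsum_mul_left, ← tsum_mul_left]
    exact tsum_congr fun h => by ring
  rw [val_eq_tsum, (summable_discounted_expectedReward hγ0 hγ1 hP hr hπ s).tsum_eq_zero_add,
    hshift, expectedReward_zero]
  simp only [qval, val_eq_tsum, mul_add, Finset.sum_add_distrib, Finset.mul_sum, Finset.sum_mul]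
  congr 1
  · simp only [pow_zero, one_mul]
    exact Finset.sum_congr rfl fun a _ => by ring
  · rw [Finset.sum_comm]
    exact Finset.sum_congr rfl fun a _ => Finset.sum_congr rfl fun s₁ _ => by ring

lemma abs_qval_le_one (hπ : IsSubPolicy π) (s : S) (a : α) : |qval γ P π r s a| ≤ 1 := by
  have h1γ : 0 < 1 - γ := sub_pos.mpr hγ1
  have hnext : |∑ s', P s a s' * val γ P π r s'| ≤ 1 :=
    abs_sum_mul_le (hP.1 s a) (hP.2 s a).le zero_le_one (abs_val_le_one hγ0 hγ1 hP hr hπ)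
  calc |qval γ P π r s a|
      ≤ |(1 - γ) * r s a| + |γ * ∑ s', P s a s' * val γ P π r s'| := abs_add_le _ _
    _ ≤ (1 - γ) * 1 + γ * 1 := by
        rw [abs_mul, abs_mul, abs_of_pos h1γ, abs_of_nonneg hγ0]
        gcongr
        exact hr s a
    _ = 1 := by ring

end Dynamics

section Simulation

variable {α : Type*} [Fintype α] {γ : ℝ} {P : S → α → S → ℝ} {π π' : S → α → ℝ}
  {r : S → α → ℝ}

lemma qval_sub_qval (s : S) (a : α) :
    qval γ P π' r s a - qval γ P π r s a
      = γ * ∑ s', P s a s' * (val γ P π' r s' - val γ P π r s') := by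
  simp only [qval, mul_sub, Finset.sum_sub_distrib]
  ring

lemma abs_qval_sub_qval_le (hγ0 : 0 ≤ γ) (hP : IsKernel P) {D : ℝ}
    (hD : ∀ s, |val γ P π' r s - val γ P π r s| ≤ D) (s : S) (a : α) :
    |qval γ P π' r s a - qval γ P π r s a| ≤ γ * D := by
  rw [qval_sub_qval, abs_mul, abs_of_nonneg hγ0]
  exact mul_le_mul_of_nonneg_left
    (abs_sum_mul_le (hP.1 s a) (hP.2 s a).le ((abs_nonneg _).trans (hD s)) hD) hγ0

lemma abs_val_sub_val_le (hγ0 : 0 ≤ γ) (hγ1 : γ < 1) (hP : IsKernel P)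
    (hr : ∀ s a, |r s a| ≤ 1) (hπ : IsSubPolicy π) (hπ' : IsSubPolicy π') {β : ℝ}
    (hβ : ∀ s, ∑ a, |π' s a - π s a| ≤ β) (s : S) :
    |val γ P π' r s - val γ P π r s| ≤ β / (1 - γ) := by
  obtain ⟨t, -, hmax⟩ := Finset.exists_max_image Finset.univ
    (fun t => |val γ P π' r t - val γ P π r t|) ⟨s, Finset.mem_univ s⟩
  set D := |val γ P π' r t - val γ P π r t|
  have hD : ∀ s, |val γ P π' r s - val γ P π r s| ≤ D := fun s => hmax s (Finset.mem_univ s)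
  have hcontract : D ≤ β + γ * D := by
    have := abs_sum_mul_sub_sum_mul_le (hπ.1 t) (hπ.2 t) (abs_qval_le_one hγ0 hγ1 hP hr hπ' t)
      (mul_nonneg hγ0 (abs_nonneg _)) (abs_qval_sub_qval_le hγ0 hP hD t) (w' := π' t)
    rw [← val_eq_sum_qval hγ0 hγ1 hP hr hπ', ← val_eq_sum_qval hγ0 hγ1 hP hr hπ] at this
    linarith [hβ t]
  have hDle : D ≤ β / (1 - γ) := by
    rw [le_div_iff₀ (sub_pos.mpr hγ1)]
    linarith
  exact (hD s).trans hDle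

end Simulation

section Product

variable {γ : ℝ} {P : S → (∀ i, A i) → S → ℝ} {πp π'p : ∀ i : Fin m, S → A i → ℝ}
  {r : S → (∀ i, A i) → ℝ}

section Policy

omit [Fintype S] [DecidableEq S] [∀ i, Nonempty (A i)]

lemma prodPolicy_isSubPolicy (h : ∀ i, IsSubPolicy (πp i)) : IsSubPolicy (prodPolicy πp) := by
  refine ⟨fun s a => Finset.prod_nonneg fun i _ => (h i).1 s (a i), fun s => ?_⟩
  unfold prodPolicy
  rw [← Fintype.prod_sum fun i b => πp i s b]
  exact Finset.prod_le_one (fun i _ => Finset.sum_nonneg fun b _ => (h i).1 s b)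
    fun i _ => (h i).2 s

lemma prodPolicy_isPolicy (h : ∀ i, IsPolicy (πp i)) : IsPolicy (prodPolicy πp) := by
  refine ⟨(prodPolicy_isSubPolicy fun i => (h i).isSubPolicy).1, fun s => ?_⟩
  unfold prodPolicy
  rw [← Fintype.prod_sum fun i b => πp i s b]
  exact Finset.prod_eq_one fun i _ => (h i).2 s

omit [∀ i, Fintype (A i)] in
lemma prodPolicy_update (s : S) (a : ∀ j, A j) (i : Fin m) (b : A i) :
    prodPolicy πp s (Function.update a i b)
      = πp i s b * ∏ j ∈ Finset.univ.erase i, πp j s (a j) := by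
  unfold prodPolicy
  rw [← Finset.mul_prod_erase _ _ (Finset.mem_univ i), Function.update_self]
  congr 1
  exact Finset.prod_congr rfl fun j hj => by
    rw [Function.update_of_ne (Finset.ne_of_mem_erase hj)]

omit [∀ i, Fintype (A i)] in
lemma prodPolicy_eq_mul_prod_erase (s : S) (a : ∀ j, A j) (i : Fin m) :
    prodPolicy πp s a = πp i s (a i) * ∏ j ∈ Finset.univ.erase i, πp j s (a j) := by
  rw [← prodPolicy_update, Function.update_eq_self]

lemma sum_mul_sum_prodPolicy_update (s : S) (i : Fin m) (hπi : ∑ b, πp i s b = 1)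
    (g : (∀ j, A j) → ℝ) :
    ∑ b, πp i s b * ∑ a, prodPolicy πp s a * g (Function.update a i b)
      = ∑ a, prodPolicy πp s a * g a := by
  have hinv : Function.Involutive fun x : A i × (∀ j, A j) => (x.2 i, Function.update x.2 i x.1) :=
    fun x => by simp
  calc ∑ b, πp i s b * ∑ a, prodPolicy πp s a * g (Function.update a i b)
      = ∑ x : A i × (∀ j, A j),
          πp i s x.1 * (prodPolicy πp s x.2 * g (Function.update x.2 i x.1)) := by
        simp only [Fintype.sum_prod_type, Finset.mul_sum]
    _ = ∑ x : A i × (∀ j, A j), πp i s x.1 * (prodPolicy πp s x.2 * g x.2) := by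
        refine Fintype.sum_equiv (hinv.toPerm _) _ _ fun x => ?_
        simp only [Function.Involutive.coe_toPerm]
        rw [prodPolicy_update, prodPolicy_eq_mul_prod_erase s x.2 i]
        ring
    _ = ∑ a, prodPolicy πp s a * g a := by
        simp only [Fintype.sum_prod_type, ← Finset.mul_sum, ← Finset.sum_mul, hπi, one_mul]

end Policy

section Values

omit [∀ i, Nonempty (A i)]

lemma val_eq_sum_mul_Qbar (hγ0 : 0 ≤ γ) (hγ1 : γ < 1) (hP : IsKernel P)
    (hr : ∀ s a, |r s a| ≤ 1) (hπp : ∀ i, IsPolicy (πp i)) (i : Fin m) (s : S) :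
    val γ P (prodPolicy πp) r s = ∑ b, πp i s b * Qbar γ P πp r i s b := by
  rw [val_eq_sum_qval hγ0 hγ1 hP hr (prodPolicy_isPolicy hπp).isSubPolicy]
  exact (sum_mul_sum_prodPolicy_update s i ((hπp i).2 s) _).symm

lemma Qbar_le_iSup (i : Fin m) (s : S) (b : A i) :
    Qbar γ P πp r i s b ≤ ⨆ b', Qbar γ P πp r i s b' :=
  le_ciSup (Set.finite_range _).bddAbove b

lemma stageGap_eq_sum_mul (hγ0 : 0 ≤ γ) (hγ1 : γ < 1) (hP : IsKernel P)
    (hr : ∀ s a, |r s a| ≤ 1) (hπp : ∀ i, IsPolicy (πp i)) (i : Fin m) (s : S) :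
    stageGap γ P πp r i s
      = ∑ b, πp i s b * ((⨆ b', Qbar γ P πp r i s b') - Qbar γ P πp r i s b) := by
  simp only [stageGap, val_eq_sum_mul_Qbar hγ0 hγ1 hP hr hπp i, mul_sub, Finset.sum_sub_distrib,
    ← Finset.sum_mul, (hπp i).2 s, one_mul]

lemma stageGap_nonneg (hγ0 : 0 ≤ γ) (hγ1 : γ < 1) (hP : IsKernel P)
    (hr : ∀ s a, |r s a| ≤ 1) (hπp : ∀ i, IsPolicy (πp i)) (i : Fin m) (s : S) :
    0 ≤ stageGap γ P πp r i s := by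
  rw [stageGap_eq_sum_mul hγ0 hγ1 hP hr hπp]
  exact Finset.sum_nonneg fun b _ =>
    mul_nonneg ((hπp i).1 s b) (sub_nonneg.mpr (Qbar_le_iSup i s b))

lemma abs_Qbar_le_one (hγ0 : 0 ≤ γ) (hγ1 : γ < 1) (hP : IsKernel P)
    (hr : ∀ s a, |r s a| ≤ 1) (hπp : ∀ i, IsSubPolicy (πp i)) (i : Fin m) (s : S) (b : A i) :
    |Qbar γ P πp r i s b| ≤ 1 :=
  abs_sum_mul_le ((prodPolicy_isSubPolicy hπp).1 s) ((prodPolicy_isSubPolicy hπp).2 s)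
    zero_le_one fun _ => abs_qval_le_one hγ0 hγ1 hP hr (prodPolicy_isSubPolicy hπp) s _

lemma abs_Qbar_sub_Qbar_le (hγ0 : 0 ≤ γ) (hγ1 : γ < 1) (hP : IsKernel P)
    (hr : ∀ s a, |r s a| ≤ 1) (hπp : ∀ i, IsSubPolicy (πp i)) (hπ'p : ∀ i, IsSubPolicy (π'p i))
    {β : ℝ} (hβ : ∀ s, ∑ a, |prodPolicy π'p s a - prodPolicy πp s a| ≤ β)
    (i : Fin m) (s : S) (b : A i) :
    |Qbar γ P π'p r i s b - Qbar γ P πp r i s b| ≤ β / (1 - γ) := by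
  have h1γ : 0 < 1 - γ := sub_pos.mpr hγ1
  have hβ0 : 0 ≤ β := (Finset.sum_nonneg fun a _ => abs_nonneg _).trans (hβ s)
  have hπ := prodPolicy_isSubPolicy hπp
  have hπ' := prodPolicy_isSubPolicy hπ'p
  have hq : ∀ s a, |qval γ P (prodPolicy π'p) r s a - qval γ P (prodPolicy πp) r s a|
      ≤ γ * (β / (1 - γ)) :=
    abs_qval_sub_qval_le hγ0 hP (abs_val_sub_val_le hγ0 hγ1 hP hr hπ hπ' hβ)
  calc |Qbar γ P π'p r i s b - Qbar γ P πp r i s b| ≤ β + γ * (β / (1 - γ)) :=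
        (abs_sum_mul_sub_sum_mul_le (hπ.1 s) (hπ.2 s)
          (fun _ => abs_qval_le_one hγ0 hγ1 hP hr hπ' s _) (by positivity) fun _ => hq s _).trans
          (add_le_add_left (hβ s) _)
    _ = β / (1 - γ) := by field_simp; ring

end Values

lemma iSup_Qbar_sub_iInf_Qbar_le_two (hγ0 : 0 ≤ γ) (hγ1 : γ < 1) (hP : IsKernel P)
    (hr : ∀ s a, |r s a| ≤ 1) (hπp : ∀ i, IsSubPolicy (πp i))
    (i : Fin m) (s : S) (q : A i → Prop) :
    (⨆ b, Qbar γ P πp r i s b) - ⨅ b : {b // q b}, Qbar γ P πp r i s b.1 ≤ 2 := by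
  have hQ := fun b => abs_le.mp (abs_Qbar_le_one hγ0 hγ1 hP hr hπp i s b)
  rcases isEmpty_or_nonempty {b // q b} with hq | hq
  · rw [Real.iInf_of_isEmpty, sub_zero]
    exact (ciSup_le fun b => (hQ b).2).trans one_le_two
  · have := iSup_sub_iInf_subtype_le (f := fun b => Qbar γ P πp r i s b) (q := q) (U := 1) (L := -1)
      (fun b => (hQ b).2) fun b _ => (hQ b).1
    linarith

end Product

section TruncPolicy

variable {γ : ℝ} {P : S → (∀ i, A i) → S → ℝ} {πp : ∀ i : Fin m, S → A i → ℝ}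
  {r : Fin m → S → (∀ i, A i) → ℝ} {k : ℝ}

omit [∀ i, Nonempty (A i)]

lemma truncPolicy_eq_truncate (i : Fin m) (s : S) :
    truncPolicy γ P πp r k i s = truncate (πp i s) (Qbar γ P πp (r i) i s)
      ((⨆ b, Qbar γ P πp (r i) i s b) - k * stageGap γ P πp (r i) i s) :=
  rfl

lemma truncPolicy_isSubPolicy (hπp : ∀ i, IsPolicy (πp i)) (i : Fin m) :
    IsSubPolicy (truncPolicy γ P πp r k i) :=
  ⟨fun s a => truncate_nonneg ((hπp i).1 s) a, fun _ => sum_truncate_le_one⟩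

lemma le_Qbar_of_truncPolicy_pos {i : Fin m} {s : S} {b : A i}
    (h : 0 < truncPolicy γ P πp r k i s b) :
    (⨆ b', Qbar γ P πp (r i) i s b') - k * stageGap γ P πp (r i) i s ≤ Qbar γ P πp (r i) i s b :=
  le_of_truncate_pos h

variable (hγ0 : 0 ≤ γ) (hγ1 : γ < 1) (hP : IsKernel P) (hr : ∀ i s a, |r i s a| ≤ 1)
  (hπp : ∀ i, IsPolicy (πp i))
include hγ0 hγ1 hP hr hπp

/-- Markov's inequality: the stage gap is the mean of the suboptimality `⨆ Qbar - Qbar`. -/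
lemma sum_filter_lt_truncThreshold_le (hk : 0 < k) (i : Fin m) (s : S) :
    ∑ b ∈ Finset.univ.filter (fun b => Qbar γ P πp (r i) i s b
        < (⨆ b', Qbar γ P πp (r i) i s b') - k * stageGap γ P πp (r i) i s), πp i s b
      ≤ 1 / k := by
  have hmarkov := sum_filter_mul_lt_le ((hπp i).1 s)
    (fun b => sub_nonneg.mpr (Qbar_le_iSup (γ := γ) (P := P) (πp := πp) (r := r i) i s b)) hk
  rw [← stageGap_eq_sum_mul hγ0 hγ1 hP (hr i) hπp] at hmarkov
  convert hmarkov using 3 with b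
  constructor <;> intro h <;> linarith

lemma sum_filter_truncThreshold_le_pos (hk : 1 < k) (i : Fin m) (s : S) :
    0 < ∑ b ∈ Finset.univ.filter (fun b => (⨆ b', Qbar γ P πp (r i) i s b')
        - k * stageGap γ P πp (r i) i s ≤ Qbar γ P πp (r i) i s b), πp i s b := by
  have hsplit := (sum_filter_le_add_sum_filter_lt Finset.univ (πp i s) (Qbar γ P πp (r i) i s)
    ((⨆ b', Qbar γ P πp (r i) i s b') - k * stageGap γ P πp (r i) i s)).trans ((hπp i).2 s)
  have hout := sum_filter_lt_truncThreshold_le hγ0 hγ1 hP hr hπp (zero_lt_one.trans hk) i s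
  have : 1 / k < 1 := (div_lt_one (zero_lt_one.trans hk)).mpr hk
  linarith

lemma truncPolicy_isPolicy (hk : 1 < k) (i : Fin m) : IsPolicy (truncPolicy γ P πp r k i) :=
  ⟨(truncPolicy_isSubPolicy hπp i).1, fun s =>
    sum_truncate_eq_one (sum_filter_truncThreshold_le_pos hγ0 hγ1 hP hr hπp hk i s).ne'⟩

lemma sum_abs_truncPolicy_sub_le (hk : 1 < k) (i : Fin m) (s : S) :
    ∑ b, |truncPolicy γ P πp r k i s b - πp i s b| ≤ 2 / k := by
  rw [truncPolicy_eq_truncate, sum_abs_truncate_sub ((hπp i).1 s) ((hπp i).2 s)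
    (sum_filter_truncThreshold_le_pos hγ0 hγ1 hP hr hπp hk i s)]
  rw [div_eq_mul_one_div 2 k]
  exact mul_le_mul_of_nonneg_left
    (sum_filter_lt_truncThreshold_le hγ0 hγ1 hP hr hπp (zero_lt_one.trans hk) i s) zero_le_two

lemma truncPolicy_eq_self_of_subsingleton (hk : 0 ≤ k) (i : Fin m) [Subsingleton (A i)] :
    truncPolicy γ P πp r k i = πp i := by
  funext s
  refine truncate_eq_self ((hπp i).2 s) fun b => ?_
  have : Nonempty (A i) := ⟨b⟩
  have hsup : (⨆ b', Qbar γ P πp (r i) i s b') ≤ Qbar γ P πp (r i) i s b :=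
    ciSup_le fun b' => (congrArg _ (Subsingleton.elim b' b)).le
  have := mul_nonneg hk (stageGap_nonneg hγ0 hγ1 hP (hr i) hπp i s)
  linarith

end TruncPolicy

section Bounds

variable {γ : ℝ} {P : S → (∀ i, A i) → S → ℝ} {πp : ∀ i : Fin m, S → A i → ℝ}
  {r : Fin m → S → (∀ i, A i) → ℝ} {k : ℝ}

omit [∀ i, Nonempty (A i)]
variable (hγ0 : 0 ≤ γ) (hγ1 : γ < 1) (hP : IsKernel P) (hr : ∀ i s a, |r i s a| ≤ 1)
  (hπp : ∀ i, IsPolicy (πp i))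
include hγ0 hγ1 hP hr hπp

lemma sum_abs_prodPolicy_truncPolicy_sub_le {p : ℕ}
    (hp : (Finset.univ.filter fun i => 1 < Fintype.card (A i)).card ≤ p) (hk : 1 < k) (s : S) :
    ∑ a, |prodPolicy (truncPolicy γ P πp r k) s a - prodPolicy πp s a| ≤ p * (2 / k) := by
  set N := Finset.univ.filter fun i : Fin m => 1 < Fintype.card (A i)
  have htrivial : ∀ i ∉ N, ∑ b, |truncPolicy γ P πp r k i s b - πp i s b| = 0 := by
    intro i hi
    have : Subsingleton (A i) := Fintype.card_le_one_iff_subsingleton.mp (by simpa [N] using hi)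
    simp [truncPolicy_eq_self_of_subsingleton hγ0 hγ1 hP hr hπp (zero_lt_one.trans hk).le i]
  calc ∑ a, |prodPolicy (truncPolicy γ P πp r k) s a - prodPolicy πp s a|
      ≤ ∑ i, ∑ b, |truncPolicy γ P πp r k i s b - πp i s b| :=
        sum_abs_prod_sub_prod_le (fun i => (hπp i).1 s) (fun i => ((hπp i).2 s).le)
          (fun i => (truncPolicy_isSubPolicy hπp i).1 s)
          fun i => (truncPolicy_isSubPolicy hπp i).2 s
    _ = ∑ i ∈ N, ∑ b, |truncPolicy γ P πp r k i s b - πp i s b| :=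
        (Finset.sum_subset (Finset.subset_univ N) fun i _ hi => htrivial i hi).symm
    _ ≤ ∑ _i ∈ N, 2 / k :=
        Finset.sum_le_sum fun i _ => sum_abs_truncPolicy_sub_le hγ0 hγ1 hP hr hπp hk i s
    _ ≤ p * (2 / k) := by
        rw [Finset.sum_const, nsmul_eq_mul]
        gcongr

lemma iSup_Qbar_truncPolicy_sub_iInf_le {p : ℕ}
    (hp : (Finset.univ.filter fun i => 1 < Fintype.card (A i)).card ≤ p) (hk : 1 < k)
    {ε : ℝ} (i : Fin m) (s : S) (hgap : stageGap γ P πp (r i) i s ≤ ε) :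
    (⨆ b, Qbar γ P (truncPolicy γ P πp r k) (r i) i s b)
        - ⨅ b : {b // 0 < truncPolicy γ P πp r k i s b},
            Qbar γ P (truncPolicy γ P πp r k) (r i) i s b.1
      ≤ k * ε + 4 * p / (k * (1 - γ)) := by
  set M := ⨆ b, Qbar γ P πp (r i) i s b
  set δ := p * (2 / k) / (1 - γ)
  have hclose := fun b => abs_le.mp <| abs_Qbar_sub_Qbar_le hγ0 hγ1 hP (hr i)
    (fun j => (hπp j).isSubPolicy) (truncPolicy_isSubPolicy hπp)
    (sum_abs_prodPolicy_truncPolicy_sub_le hγ0 hγ1 hP hr hπp hp hk) i s b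
  have : Nonempty {b // 0 < truncPolicy γ P πp r k i s b} :=
    nonempty_pos_of_sum_eq_one ((truncPolicy_isPolicy hγ0 hγ1 hP hr hπp hk i).2 s)
  have hkρ : k * stageGap γ P πp (r i) i s ≤ k * ε :=
    mul_le_mul_of_nonneg_left hgap (zero_lt_one.trans hk).le
  refine (iSup_sub_iInf_subtype_le (U := M + δ) (L := M - k * ε - δ) (fun b => ?_)
    fun b hb => ?_).trans_eq ?_
  · linarith [(hclose b).2, Qbar_le_iSup (γ := γ) (P := P) (πp := πp) (r := r i) i s b]
  · linarith [(hclose b).1, le_Qbar_of_truncPolicy_pos hb]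
  · have : k ≠ 0 := (zero_lt_one.trans hk).ne'
    have : 1 - γ ≠ 0 := (sub_pos.mpr hγ1).ne'
    simp only [δ]
    field_simp
    ring

end Bounds

/-- If at most `p` players have a nontrivial action set and `πp` is an ε-PNE-SG, then the
truncated policy with `k = sqrt(8p/((1-γ)ε))` is a `6·sqrt(pε/(1-γ))`-perfect well-supported
Nash equilibrium in stage games. -/
theorem truncation_gives_PWSNE_SG (γ : ℝ) (hγ0 : 0 ≤ γ) (hγ1 : γ < 1)
    (P : S → (∀ i, A i) → S → ℝ) (hP : IsKernel P)
    (πp : ∀ i : Fin m, S → A i → ℝ) (hπp : ∀ i, IsPolicy (πp i))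
    (r : Fin m → S → (∀ i, A i) → ℝ) (hr : ∀ i s a, |r i s a| ≤ 1)
    (p : ℕ)
    (hp : ((Finset.univ : Finset (Fin m)).filter (fun i => 1 < Fintype.card (A i))).card ≤ p)
    (ε : ℝ) (hε : 0 < ε)
    (hPNESG : ∀ i s, stageGap γ P πp (r i) i s ≤ ε) :
    ∀ (i : Fin m) (s : S),
      (⨆ aᵢ : A i,
          Qbar γ P (truncPolicy γ P πp r (Real.sqrt (8 * p / ((1 - γ) * ε)))) (r i) i s aᵢ)
        - (⨅ aᵢ : {a : A i //
              0 < truncPolicy γ P πp r (Real.sqrt (8 * p / ((1 - γ) * ε))) i s a},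
            Qbar γ P (truncPolicy γ P πp r (Real.sqrt (8 * p / ((1 - γ) * ε)))) (r i) i s aᵢ.1)
        ≤ 6 * Real.sqrt (p * ε / (1 - γ)) := by
  intro i s
  set k := √(8 * p / ((1 - γ) * ε))
  have h1γ : 0 < 1 - γ := sub_pos.mpr hγ1
  by_cases htrivial : Fintype.card (A i) ≤ 1
  · have : Subsingleton (A i) := Fintype.card_le_one_iff_subsingleton.mp htrivial
    have hself :=
      truncPolicy_eq_self_of_subsingleton hγ0 hγ1 hP hr hπp (k := k) (Real.sqrt_nonneg _) i
    have : Nonempty {b // 0 < truncPolicy γ P πp r k i s b} := by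
      rw [hself]
      exact nonempty_pos_of_sum_eq_one ((hπp i).2 s)
    exact iSup_sub_iInf_subtype_nonpos.trans (by positivity)
  have hnontrivial : 0 < (Finset.univ.filter fun j => 1 < Fintype.card (A j)).card :=
    Finset.card_pos.mpr ⟨i, by simpa using htrivial⟩
  have hp1 : (1 : ℝ) ≤ p := by exact_mod_cast hnontrivial.trans_le hp
  by_cases hk : 1 < k
  · exact (iSup_Qbar_truncPolicy_sub_iInf_le hγ0 hγ1 hP hr hπp hp hk i s (hPNESG i s)).trans
      (mul_add_div_le_six_mul_sqrt h1γ hε (by linarith))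
  · exact (iSup_Qbar_sub_iInf_Qbar_le_two hγ0 hγ1 hP (hr i)
      (fun j => (truncPolicy_isSubPolicy hπp j)) i s _).trans
      (two_le_six_mul_sqrt h1γ (by linarith) hε hp1 (not_lt.mp hk))

end Stmt5
end

section
/- (G_← gate gadget) Let G be a γ-discounted turn-based stochastic game with binary actions at each state and a zero-reward absorbing sink. Suppose a state v satisfies: both actions at v transition deterministically to the sink, and the controller of v receives reward b for action 1 and reward 1-b for action 0, where b ∈ {0,1}. Then for any policy π : S → [0,1] under which v is ε-unimprovable with ε < (1-γ)/2, it holds that π(v) = b. -/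
open scoped BigOperators

namespace Stmt7

variable {S : Type*} [Fintype S] [DecidableEq S]

/-- Transition kernel of a turn-based game with binary actions at each state. -/
def IsBKernel (P : S → Bool → S → ℝ) : Prop :=
  (∀ s a s', 0 ≤ P s a s') ∧ ∀ s a, ∑ s', P s a s' = 1

/-- A stationary policy of a binary-action turn-based game, represented by the probability
`π s ∈ [0,1]` that the controller of state `s` plays action `1` (`true`). -/
def IsBPolicy (π : S → ℝ) : Prop :=
  ∀ s, 0 ≤ π s ∧ π s ≤ 1

noncomputable def bStep (P : S → Bool → S → ℝ) (π : S → ℝ) (d : S → ℝ) : S → ℝ :=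
  fun s' => ∑ s, d s * (π s * P s true s' + (1 - π s) * P s false s')

noncomputable def bDist (P : S → Bool → S → ℝ) (π : S → ℝ) (s₀ : S) (h : ℕ) : S → ℝ :=
  (bStep P π)^[h] (fun s => if s = s₀ then (1 : ℝ) else 0)

/-- Normalized discounted value of the player with reward function `r` under policy `π`. -/
noncomputable def bVal (γ : ℝ) (P : S → Bool → S → ℝ) (π : S → ℝ) (r : S → Bool → ℝ)
    (s₀ : S) : ℝ :=
  (1 - γ) * ∑' h : ℕ, γ ^ h *
    ∑ s, bDist P π s₀ h s * (π s * r s true + (1 - π s) * r s false)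

/-- Normalized discounted action-value for the controller of `s` (with reward function `r`). -/
noncomputable def bQ (γ : ℝ) (P : S → Bool → S → ℝ) (π : S → ℝ) (r : S → Bool → ℝ)
    (s : S) (a : Bool) : ℝ :=
  (1 - γ) * r s a + γ * ∑ s', P s a s' * bVal γ P π r s'

/-- `s` is ε-unimprovable under `π` (for the controller's reward function `r`):
`max_{a'} Q(s,a') - min_{a : π(s) ≠ 1-a} Q(s,a) ≤ ε`, where the min ranges over actions
played with positive probability. -/
def Unimp (ε γ : ℝ) (P : S → Bool → S → ℝ) (π : S → ℝ) (r : S → Bool → ℝ) (s : S) : Prop :=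
  ∀ a' a : Bool, (if a then π s ≠ 0 else π s ≠ 1) →
    bQ γ P π r s a' - bQ γ P π r s a ≤ ε

/-!
The sink has value `0`, so `Q(v, a) = (1 - γ) r(v, a)`: the two actions at `v` differ in value by
`1 - γ > ε`, and ε-unimprovability forbids playing the worse one with positive probability.
-/

section Absorbing

variable {P : S → Bool → S → ℝ} {z : S}

theorem bDist_of_absorbing (hPz : ∀ a s', P z a s' = if s' = z then 1 else 0)
    (π : S → ℝ) (h : ℕ) :
    bDist P π z h = fun s => if s = z then (1 : ℝ) else 0 := by
  induction h with
  | zero => rfl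
  | succ n ih =>
    rw [bDist, Function.iterate_succ_apply', ← bDist, ih]
    funext s'
    rw [bStep, Finset.sum_eq_single_of_mem z (Finset.mem_univ z) (by intro s _ hs; simp [hs])]
    simp only [if_true, one_mul, hPz]
    ring

theorem bVal_eq_zero_of_absorbing (hPz : ∀ a s', P z a s' = if s' = z then 1 else 0)
    (γ : ℝ) (π : S → ℝ) {r : S → Bool → ℝ} (hrz : ∀ a, r z a = 0) :
    bVal γ P π r z = 0 := by
  have hstep : ∀ h : ℕ, ∑ s, bDist P π z h s * (π s * r s true + (1 - π s) * r s false) = 0 := by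
    intro h
    rw [bDist_of_absorbing hPz, Finset.sum_eq_single_of_mem z (Finset.mem_univ z)
      (by intro s _ hs; simp [hs])]
    simp [hrz]
  simp [bVal, hstep]

end Absorbing

theorem bQ_of_deterministic {P : S → Bool → S → ℝ} {s z : S} {a : Bool}
    (hPs : ∀ s', P s a s' = if s' = z then 1 else 0) (γ : ℝ) (π : S → ℝ) (r : S → Bool → ℝ) :
    bQ γ P π r s a = (1 - γ) * r s a + γ * bVal γ P π r z := by
  simp [bQ, hPs]

section Unimp

variable {ε γ : ℝ} {P : S → Bool → S → ℝ} {π : S → ℝ} {r : S → Bool → ℝ} {s : S}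

theorem Unimp.eq_zero_of_lt (hs : Unimp ε γ P π r s) {a' : Bool}
    (hgap : ε < bQ γ P π r s a' - bQ γ P π r s true) : π s = 0 := by
  by_contra hne
  exact (hs a' true hne).not_gt hgap

theorem Unimp.eq_one_of_lt (hs : Unimp ε γ P π r s) {a' : Bool}
    (hgap : ε < bQ γ P π r s a' - bQ γ P π r s false) : π s = 1 := by
  by_contra hne
  exact (hs a' false hne).not_gt hgap

end Unimp

theorem g_gets_gadget_general (γ : ℝ) (hγ1 : γ < 1)
    (P : S → Bool → S → ℝ)
    (v z : S) (b : ℝ) (hb : b = 0 ∨ b = 1)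
    (hPv : ∀ a s', P v a s' = if s' = z then 1 else 0)
    (hPz : ∀ a s', P z a s' = if s' = z then 1 else 0)
    (r : S → Bool → ℝ)
    (hrv1 : r v true = b) (hrv0 : r v false = 1 - b)
    (hrz : ∀ a, r z a = 0)
    (π : S → ℝ)
    (ε : ℝ) (hε : ε < (1 - γ) / 2)
    (hunimp : Unimp ε γ P π r v) :
    π v = b := by
  have hQ : ∀ a, bQ γ P π r v a = (1 - γ) * r v a := fun a => by
    rw [bQ_of_deterministic (hPv a), bVal_eq_zero_of_absorbing hPz γ π hrz, mul_zero, add_zero]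
  rcases hb with rfl | rfl
  · refine hunimp.eq_zero_of_lt (a' := false) ?_
    rw [hQ, hQ, hrv0, hrv1]
    linarith
  · refine hunimp.eq_one_of_lt (a' := true) ?_
    rw [hQ, hQ, hrv0, hrv1]
    linarith

/-- G_← gate gadget: if both actions at `v` lead to the zero-reward absorbing sink and the
controller of `v` gets reward `b` for action 1 and `1-b` for action 0 (with `b ∈ {0,1}`),
then any policy under which `v` is ε-unimprovable with `ε < (1-γ)/2` satisfies `π(v) = b`. -/
theorem g_gets_gadget (γ : ℝ) (hγ0 : 0 ≤ γ) (hγ1 : γ < 1)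
    (P : S → Bool → S → ℝ) (hP : IsBKernel P)
    (v z : S) (b : ℝ) (hb : b = 0 ∨ b = 1)
    (hPv : ∀ a s', P v a s' = if s' = z then 1 else 0)
    (hPz : ∀ a s', P z a s' = if s' = z then 1 else 0)
    (r : S → Bool → ℝ)
    (hrv1 : r v true = b) (hrv0 : r v false = 1 - b)
    (hrz : ∀ a, r z a = 0)
    (π : S → ℝ) (hπ : IsBPolicy π)
    (ε : ℝ) (hε : ε < (1 - γ) / 2)
    (hunimp : Unimp ε γ P π r v) :
    π v = b :=
  g_gets_gadget_general γ hγ1 P v z b hb hPv hPz r hrv1 hrv0 hrz π ε hε hunimp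

end Stmt7
end

section
/- (G_< gate gadget) Suppose the comparison gate G_<(|v_1,v_2|v_3) embeds in a γ-discounted turn-based stochastic game via states (v_1,v_2,v_3,w) and constant β with |β| ≤ 1-γ, and suppose γ|β|ε - 2γ² > ε' for ε, ε' ∈ (0,1). Then for any policy π : S → [0,1] under which v_3 and w are each ε'-unimprovable: if π(v_1) ≤ π(v_2) - ε then π(v_3) = 1, and if π(v_1) ≥ π(v_2) + ε then π(v_3) = 0. -/
/-!
With rewards bounded by `1`, the normalized value of a state is its scaled one-step reward up to
an error `γ`. So the advantage of action `1` over action `0` is `γβ(π v₂ - π v₁)` at `w` and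
`γβ(2π w - 1)` at `v₃`, each up to `2γ²`. An advantage exceeding `ε' + 2γ²` in absolute value
forces an `ε'`-unimprovable controller to play its sign deterministically. Once
`|π v₂ - π v₁| ≥ ε`, this happens at `w` and then at `v₃`, and the two signs of `β` cancel:
`v₃` plays the sign of `π v₂ - π v₁`.
-/

open scoped BigOperators

namespace Stmt8

variable {S : Type*} [Fintype S] [DecidableEq S]

/-- Transition kernel of a turn-based game with binary actions at each state. -/
def IsBKernel (P : S → Bool → S → ℝ) : Prop :=
  (∀ s a s', 0 ≤ P s a s') ∧ ∀ s a, ∑ s', P s a s' = 1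

/-- A stationary policy of a binary-action turn-based game, represented by the probability
`π s ∈ [0,1]` that the controller of state `s` plays action `1` (`true`). -/
def IsBPolicy (π : S → ℝ) : Prop :=
  ∀ s, 0 ≤ π s ∧ π s ≤ 1

noncomputable def bStep (P : S → Bool → S → ℝ) (π : S → ℝ) (d : S → ℝ) : S → ℝ :=
  fun s' => ∑ s, d s * (π s * P s true s' + (1 - π s) * P s false s')

noncomputable def bDist (P : S → Bool → S → ℝ) (π : S → ℝ) (s₀ : S) (h : ℕ) : S → ℝ :=
  (bStep P π)^[h] (fun s => if s = s₀ then (1 : ℝ) else 0)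

/-- Normalized discounted value of the player with reward function `r` under policy `π`. -/
noncomputable def bVal (γ : ℝ) (P : S → Bool → S → ℝ) (π : S → ℝ) (r : S → Bool → ℝ)
    (s₀ : S) : ℝ :=
  (1 - γ) * ∑' h : ℕ, γ ^ h *
    ∑ s, bDist P π s₀ h s * (π s * r s true + (1 - π s) * r s false)

/-- Normalized discounted action-value for the controller of `s` (with reward function `r`). -/
noncomputable def bQ (γ : ℝ) (P : S → Bool → S → ℝ) (π : S → ℝ) (r : S → Bool → ℝ)
    (s : S) (a : Bool) : ℝ :=
  (1 - γ) * r s a + γ * ∑ s', P s a s' * bVal γ P π r s'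

/-- `s` is ε-unimprovable under `π` (for the controller's reward function `r`):
`max_{a'} Q(s,a') - min_{a : π(s) ≠ 1-a} Q(s,a) ≤ ε`, where the min ranges over actions
played with positive probability. -/
def Unimp (ε γ : ℝ) (P : S → Bool → S → ℝ) (π : S → ℝ) (r : S → Bool → ℝ) (s : S) : Prop :=
  ∀ a' a : Bool, (if a then π s ≠ 0 else π s ≠ 1) →
    bQ γ P π r s a' - bQ γ P π r s a ≤ ε

end Stmt8

namespace Stmt8

lemma abs_mix_le {p a b M : ℝ} (hp₀ : 0 ≤ p) (hp₁ : p ≤ 1) (ha : |a| ≤ M) (hb : |b| ≤ M) :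
    |p * a + (1 - p) * b| ≤ M := by
  obtain ⟨ha₁, ha₂⟩ := abs_le.mp ha
  obtain ⟨hb₁, hb₂⟩ := abs_le.mp hb
  exact abs_le.mpr ⟨by nlinarith, by nlinarith⟩

lemma abs_tsum_sub_le_of_abs_le_pow {γ : ℝ} (hγ₀ : 0 ≤ γ) (hγ₁ : γ < 1) {f : ℕ → ℝ}
    (hf : ∀ n, |f n| ≤ γ ^ n) : |∑' n, f n - f 0| ≤ γ / (1 - γ) := by
  have hf' : ∀ n, ‖f n‖ ≤ γ ^ n := fun n => (Real.norm_eq_abs _).trans_le (hf n)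
  have hsum : Summable f := .of_norm_bounded (summable_geometric_of_lt_one hγ₀ hγ₁) hf'
  have htail : HasSum (fun n : ℕ => γ ^ (n + 1)) (γ / (1 - γ)) := by
    simpa [pow_succ', div_eq_mul_inv] using (hasSum_geometric_of_lt_one hγ₀ hγ₁).mul_left γ
  rw [hsum.tsum_eq_zero_add, add_sub_cancel_left]
  exact tsum_of_norm_bounded htail fun n => hf' (n + 1)

section

variable {S : Type*} {π : S → ℝ} {r : S → Bool → ℝ}

def bReward (π : S → ℝ) (r : S → Bool → ℝ) (s : S) : ℝ :=
  π s * r s true + (1 - π s) * r s false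

lemma abs_bReward_le (hπ : IsBPolicy π) (hr : ∀ s a, |r s a| ≤ 1) (s : S) :
    |bReward π r s| ≤ 1 :=
  abs_mix_le (hπ s).1 (hπ s).2 (hr s true) (hr s false)

end

section

variable {S : Type*} [Fintype S] {P : S → Bool → S → ℝ} {π : S → ℝ}

lemma abs_sum_mul_le_of_sum_eq_one {d g : S → ℝ} (hd₀ : ∀ s, 0 ≤ d s) (hd₁ : ∑ s, d s = 1)
    (hg : ∀ s, |g s| ≤ 1) : |∑ s, d s * g s| ≤ 1 :=
  calc |∑ s, d s * g s| ≤ ∑ s, |d s * g s| := Finset.abs_sum_le_sum_abs _ _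
    _ ≤ ∑ s, d s := Finset.sum_le_sum fun s _ => by
        rw [abs_mul, abs_of_nonneg (hd₀ s)]
        exact mul_le_of_le_one_right (hd₀ s) (hg s)
    _ = 1 := hd₁

lemma bStep_nonneg (hP : IsBKernel P) (hπ : IsBPolicy π) {d : S → ℝ} (hd : ∀ s, 0 ≤ d s)
    (s' : S) : 0 ≤ bStep P π d s' :=
  Finset.sum_nonneg fun s _ => mul_nonneg (hd s) <|
    add_nonneg (mul_nonneg (hπ s).1 (hP.1 s true s'))
      (mul_nonneg (sub_nonneg.mpr (hπ s).2) (hP.1 s false s'))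

lemma sum_bStep (hP : IsBKernel P) (d : S → ℝ) : ∑ s', bStep P π d s' = ∑ s, d s := by
  unfold bStep
  rw [Finset.sum_comm]
  refine Finset.sum_congr rfl fun s _ => ?_
  rw [← Finset.mul_sum, Finset.sum_add_distrib, ← Finset.mul_sum, ← Finset.mul_sum,
    hP.2 s true, hP.2 s false]
  ring

end

section

variable {S : Type*} [Fintype S] [DecidableEq S]
  {γ : ℝ} {P : S → Bool → S → ℝ} {π : S → ℝ} {r : S → Bool → ℝ}

lemma bDist_succ (s₀ : S) (h : ℕ) :
    bDist P π s₀ (h + 1) = bStep P π (bDist P π s₀ h) :=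
  Function.iterate_succ_apply' _ _ _

lemma bDist_nonneg (hP : IsBKernel P) (hπ : IsBPolicy π) (s₀ : S) (h : ℕ) (s : S) :
    0 ≤ bDist P π s₀ h s := by
  induction h generalizing s with
  | zero => simp only [bDist, Function.iterate_zero, id_eq]; split_ifs <;> norm_num
  | succ n ih => rw [bDist_succ]; exact bStep_nonneg hP hπ ih s

lemma sum_bDist (hP : IsBKernel P) (s₀ : S) (h : ℕ) : ∑ s, bDist P π s₀ h s = 1 := by
  induction h with
  | zero => simp [bDist]
  | succ n ih => rw [bDist_succ, sum_bStep hP, ih]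

lemma abs_bVal_sub_le (hγ₀ : 0 ≤ γ) (hγ₁ : γ < 1) (hP : IsBKernel P) (hπ : IsBPolicy π)
    (hr : ∀ s a, |r s a| ≤ 1) (s₀ : S) :
    |bVal γ P π r s₀ - (1 - γ) * bReward π r s₀| ≤ γ := by
  set f : ℕ → ℝ := fun h => γ ^ h * ∑ s, bDist P π s₀ h s * bReward π r s
  have hf : ∀ h, |f h| ≤ γ ^ h := fun h => by
    rw [abs_mul, abs_of_nonneg (pow_nonneg hγ₀ h)]
    exact mul_le_of_le_one_right (pow_nonneg hγ₀ h) <| abs_sum_mul_le_of_sum_eq_one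
      (bDist_nonneg hP hπ s₀ h) (sum_bDist hP s₀ h) (abs_bReward_le hπ hr)
  have hf₀ : f 0 = bReward π r s₀ := by simp [f, bDist, ite_mul]
  have h1γ : 0 < 1 - γ := sub_pos.mpr hγ₁
  calc |bVal γ P π r s₀ - (1 - γ) * bReward π r s₀| = (1 - γ) * |∑' h, f h - f 0| := by
        rw [hf₀, ← abs_of_pos h1γ, ← abs_mul, abs_of_pos h1γ, mul_sub]; rfl
    _ ≤ (1 - γ) * (γ / (1 - γ)) :=
        mul_le_mul_of_nonneg_left (abs_tsum_sub_le_of_abs_le_pow hγ₀ hγ₁ hf) h1γ.le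
    _ = γ := by field_simp

lemma abs_bVal_sub_le_of_eq_div (hγ₀ : 0 ≤ γ) (hγ₁ : γ < 1) (hP : IsBKernel P)
    (hπ : IsBPolicy π) (hr : ∀ s a, |r s a| ≤ 1) {s : S} {a b : ℝ}
    (htrue : r s true = a / (1 - γ)) (hfalse : r s false = b / (1 - γ)) :
    |bVal γ P π r s - (π s * a + (1 - π s) * b)| ≤ γ := by
  have h1γ : 1 - γ ≠ 0 := (sub_pos.mpr hγ₁).ne'
  have hscaled : (1 - γ) * bReward π r s = π s * a + (1 - π s) * b := by
    rw [bReward, htrue, hfalse]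
    field_simp
  simpa only [hscaled] using abs_bVal_sub_le hγ₀ hγ₁ hP hπ hr s

lemma bQ_of_forall_eq_ite {s t : S} {a : Bool} (hs : ∀ s', P s a s' = if s' = t then 1 else 0) :
    bQ γ P π r s a = (1 - γ) * r s a + γ * bVal γ P π r t := by
  simp [bQ, hs, ite_mul, Finset.sum_ite_eq']

lemma abs_bQ_sub_bQ_sub_le (hγ₀ : 0 ≤ γ) {s t₀ t₁ : S} (hr : ∀ a, r s a = 0)
    (h₀ : ∀ s', P s false s' = if s' = t₀ then 1 else 0)
    (h₁ : ∀ s', P s true s' = if s' = t₁ then 1 else 0) {x₀ x₁ : ℝ}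
    (hx₀ : |bVal γ P π r t₀ - x₀| ≤ γ) (hx₁ : |bVal γ P π r t₁ - x₁| ≤ γ) :
    |bQ γ P π r s true - bQ γ P π r s false - γ * (x₁ - x₀)| ≤ 2 * γ ^ 2 := by
  rw [bQ_of_forall_eq_ite h₁, bQ_of_forall_eq_ite h₀, hr, hr]
  obtain ⟨hx₀l, hx₀u⟩ := abs_le.mp hx₀
  obtain ⟨hx₁l, hx₁u⟩ := abs_le.mp hx₁
  exact abs_le.mpr ⟨by nlinarith, by nlinarith⟩

/-- The conclusion says that the controller plays the sign of `c` deterministically. -/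
lemma Unimp.two_mul_sub_one_mul_eq_abs {ε : ℝ} {s : S} (hs : Unimp ε γ P π r s) {c δ : ℝ}
    (hc : |bQ γ P π r s true - bQ γ P π r s false - c| ≤ δ) (hcδ : ε + δ < |c|) :
    (2 * π s - 1) * c = |c| := by
  obtain ⟨hcl, hcu⟩ := abs_le.mp hc
  rcases lt_trichotomy c 0 with hneg | rfl | hpos
  · have hπs : π s = 0 := by
      by_contra hne
      have := hs false true (by simpa using hne)
      rw [abs_of_neg hneg] at hcδ
      linarith
    rw [hπs, abs_of_neg hneg]
    ring
  · simp
  · have hπs : π s = 1 := by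
      by_contra hne
      have := hs true false (by simpa using hne)
      rw [abs_of_pos hpos] at hcδ
      linarith
    rw [hπs, abs_of_pos hpos]
    ring

end

lemma abs_eq_one_of_mul_eq_abs {x c : ℝ} (h : x * c = |c|) (hc : c ≠ 0) : |x| = 1 := by
  have := congrArg abs h
  rwa [abs_mul, abs_abs, mul_eq_right₀ (abs_ne_zero.mpr hc)] at this

/-- If `σ` is the sign of `k t` and `τ` the sign of `k σ`, then `τ` is the sign of `t`. -/
lemma mul_abs_eq_of_sign_chain {k t σ τ : ℝ} (hk : k ≠ 0) (hσ : σ * (k * t) = |k * t|)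
    (hσ₁ : |σ| = 1) (hτ : τ * (k * σ) = |k * σ|) : τ * |t| = t := by
  rw [abs_mul, hσ₁, mul_one] at hτ
  rw [abs_mul] at hσ
  apply mul_left_cancel₀ (abs_ne_zero.mpr hk)
  calc |k| * (τ * |t|) = τ * (σ * (k * t)) := by rw [hσ]; ring
    _ = τ * (k * σ) * t := by ring
    _ = |k| * t := by rw [hτ]

section

variable {S : Type*} [Fintype S] [DecidableEq S]
  {γ β : ℝ} {P : S → Bool → S → ℝ} {π : S → ℝ} {v1 v2 v3 w z : S}

lemma abs_bQ_comparison_sub_le (hγ₀ : 0 ≤ γ) (hγ₁ : γ < 1) (hP : IsBKernel P)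
    (hπ : IsBPolicy π) (hPw0 : ∀ s', P w false s' = if s' = v1 then 1 else 0)
    (hPw1 : ∀ s', P w true s' = if s' = v2 then 1 else 0) {rw : S → Bool → ℝ}
    (hrwB : ∀ s a, |rw s a| ≤ 1)
    (hrw1 : rw v1 true = β / (1 - γ)) (hrw2 : rw v2 true = β / (1 - γ))
    (hrw10 : rw v1 false = 0) (hrw20 : rw v2 false = 0) (hrww : ∀ a, rw w a = 0) :
    |bQ γ P π rw w true - bQ γ P π rw w false - γ * β * (π v2 - π v1)| ≤ 2 * γ ^ 2 := by
  have hV1 := abs_bVal_sub_le_of_eq_div hγ₀ hγ₁ hP hπ hrwB hrw1 (b := 0) (by rw [hrw10, zero_div])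
  have hV2 := abs_bVal_sub_le_of_eq_div hγ₀ hγ₁ hP hπ hrwB hrw2 (b := 0) (by rw [hrw20, zero_div])
  convert abs_bQ_sub_bQ_sub_le hγ₀ hrww hPw0 hPw1 hV1 hV2 using 3
  ring

lemma abs_bQ_output_sub_le (hγ₀ : 0 ≤ γ) (hγ₁ : γ < 1) (hP : IsBKernel P)
    (hπ : IsBPolicy π) (hPv31 : ∀ s', P v3 true s' = if s' = w then 1 else 0)
    (hPv30 : ∀ s', P v3 false s' = if s' = z then 1 else 0) {rv3 : S → Bool → ℝ}
    (hrv3B : ∀ s a, |rv3 s a| ≤ 1)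
    (hrv3w1 : rv3 w true = β / (1 - γ)) (hrv3w0 : rv3 w false = -β / (1 - γ))
    (hrv3v : ∀ a, rv3 v3 a = 0) (hrv3z : ∀ a, rv3 z a = 0) :
    |bQ γ P π rv3 v3 true - bQ γ P π rv3 v3 false - γ * β * (2 * π w - 1)| ≤ 2 * γ ^ 2 := by
  have hVw := abs_bVal_sub_le_of_eq_div hγ₀ hγ₁ hP hπ hrv3B hrv3w1 hrv3w0
  have hVz := abs_bVal_sub_le_of_eq_div hγ₀ hγ₁ hP hπ hrv3B (a := 0) (b := 0)
    (by rw [hrv3z, zero_div]) (by rw [hrv3z, zero_div])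
  convert abs_bQ_sub_bQ_sub_le hγ₀ hrv3v hPv30 hPv31 hVz hVw using 3
  ring

end

variable {S : Type*} [Fintype S] [DecidableEq S]

theorem g_lt_gadget_general (γ ε ε' β : ℝ) (hγ0 : 0 ≤ γ) (hγ1 : γ < 1)
    (hε : ε ∈ Set.Ioo (0:ℝ) 1) (hε' : ε' ∈ Set.Ioo (0:ℝ) 1)
    (hcond : γ * |β| * ε - 2 * γ ^ 2 > ε')
    (P : S → Bool → S → ℝ) (hP : IsBKernel P)
    (v1 v2 v3 w z : S)
    (hPw0 : ∀ s', P w false s' = if s' = v1 then 1 else 0)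
    (hPw1 : ∀ s', P w true s' = if s' = v2 then 1 else 0)
    (hPv31 : ∀ s', P v3 true s' = if s' = w then 1 else 0)
    (hPv30 : ∀ s', P v3 false s' = if s' = z then 1 else 0)
    (rw rv3 : S → Bool → ℝ)
    (hrwB : ∀ s a, |rw s a| ≤ 1) (hrv3B : ∀ s a, |rv3 s a| ≤ 1)
    (hrw1 : rw v1 true = β / (1 - γ)) (hrw2 : rw v2 true = β / (1 - γ))
    (hrw10 : rw v1 false = 0) (hrw20 : rw v2 false = 0)
    (hrww : ∀ a, rw w a = 0)
    (hrv3w1 : rv3 w true = β / (1 - γ)) (hrv3w0 : rv3 w false = -β / (1 - γ))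
    (hrv3v : ∀ a, rv3 v3 a = 0) (hrv3z : ∀ a, rv3 z a = 0)
    (π : S → ℝ) (hπ : IsBPolicy π)
    (hw : Unimp ε' γ P π rw w) (hv3 : Unimp ε' γ P π rv3 v3) :
    (π v1 ≤ π v2 - ε → π v3 = 1) ∧ (π v1 ≥ π v2 + ε → π v3 = 0) := by
  obtain ⟨hε₀, hε₁⟩ := hε
  have hγβ : |γ * β| = γ * |β| := by rw [abs_mul, abs_of_nonneg hγ0]
  have hγβ₀ : 0 ≤ γ * |β| := mul_nonneg hγ0 (abs_nonneg β)
  suffices key : ε ≤ |π v2 - π v1| → (2 * π v3 - 1) * |π v2 - π v1| = π v2 - π v1 by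
    refine ⟨fun h => ?_, fun h => ?_⟩
    · have ht := key (by rw [abs_of_pos (by linarith)]; linarith)
      rw [abs_of_pos (by linarith)] at ht
      nlinarith
    · have ht := key (by rw [abs_of_neg (by linarith)]; linarith)
      rw [abs_of_neg (by linarith)] at ht
      nlinarith
  intro ht
  have hcw : ε' + 2 * γ ^ 2 < |γ * β * (π v2 - π v1)| := by
    rw [abs_mul, hγβ]; nlinarith [mul_le_mul_of_nonneg_left ht hγβ₀]
  have hσ := hw.two_mul_sub_one_mul_eq_abs (abs_bQ_comparison_sub_le hγ0 hγ1 hP hπ hPw0 hPw1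
    hrwB hrw1 hrw2 hrw10 hrw20 hrww) hcw
  have hcw₀ : γ * β * (π v2 - π v1) ≠ 0 := abs_pos.mp (by nlinarith [hε'.1])
  have hσ₁ := abs_eq_one_of_mul_eq_abs hσ hcw₀
  have hτ := hv3.two_mul_sub_one_mul_eq_abs (abs_bQ_output_sub_le hγ0 hγ1 hP hπ hPv31 hPv30
    hrv3B hrv3w1 hrv3w0 hrv3v hrv3z) (by rw [abs_mul, hσ₁, mul_one, hγβ]; nlinarith)
  exact mul_abs_eq_of_sign_chain (left_ne_zero_of_mul hcw₀) hσ hσ₁ hτ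

/-- G_< gate gadget: if the comparison gate embeds via `(v1, v2, v3, w)` and constant `β`
with `|β| ≤ 1-γ` and `γ|β|ε - 2γ² > ε'`, then for any policy under which `v3` and `w` are
ε'-unimprovable: `π(v1) ≤ π(v2) - ε → π(v3) = 1` and `π(v1) ≥ π(v2) + ε → π(v3) = 0`. -/
theorem g_lt_gadget (γ ε ε' β : ℝ) (hγ0 : 0 ≤ γ) (hγ1 : γ < 1)
    (hε : ε ∈ Set.Ioo (0:ℝ) 1) (hε' : ε' ∈ Set.Ioo (0:ℝ) 1)
    (hβ : |β| ≤ 1 - γ) (hcond : γ * |β| * ε - 2 * γ ^ 2 > ε')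
    (P : S → Bool → S → ℝ) (hP : IsBKernel P)
    (v1 v2 v3 w z : S)
    (hPz : ∀ a s', P z a s' = if s' = z then 1 else 0)
    (hPw0 : ∀ s', P w false s' = if s' = v1 then 1 else 0)
    (hPw1 : ∀ s', P w true s' = if s' = v2 then 1 else 0)
    (hPv31 : ∀ s', P v3 true s' = if s' = w then 1 else 0)
    (hPv30 : ∀ s', P v3 false s' = if s' = z then 1 else 0)
    (rw rv3 : S → Bool → ℝ)
    (hrwB : ∀ s a, |rw s a| ≤ 1) (hrv3B : ∀ s a, |rv3 s a| ≤ 1)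
    (hrw1 : rw v1 true = β / (1 - γ)) (hrw2 : rw v2 true = β / (1 - γ))
    (hrw10 : rw v1 false = 0) (hrw20 : rw v2 false = 0)
    (hrww : ∀ a, rw w a = 0) (hrwz : ∀ a, rw z a = 0)
    (hrv3w1 : rv3 w true = β / (1 - γ)) (hrv3w0 : rv3 w false = -β / (1 - γ))
    (hrv3v : ∀ a, rv3 v3 a = 0) (hrv3z : ∀ a, rv3 z a = 0)
    (π : S → ℝ) (hπ : IsBPolicy π)
    (hw : Unimp ε' γ P π rw w) (hv3 : Unimp ε' γ P π rv3 v3) :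
    (π v1 ≤ π v2 - ε → π v3 = 1) ∧ (π v1 ≥ π v2 + ε → π v3 = 0) :=
  g_lt_gadget_general γ ε ε' β hγ0 hγ1 hε hε' hcond P hP v1 v2 v3 w z hPw0 hPw1 hPv31 hPv30 rw rv3
    hrwB hrv3B hrw1 hrw2 hrw10 hrw20 hrww hrv3w1 hrv3w0 hrv3v hrv3z π hπ hw hv3

end Stmt8
end

section
/- (G_{×,+} gate gadget) Suppose the gate G_{×,+}(α/(2β), ψ/(2β) | v_1, v_2 | v_3) embeds in a γ-discounted turn-based stochastic game via states (v_1,v_2,v_3,w) and constants (α,ψ,β) each of absolute value at most 1-γ, and suppose γ|β|ε - 2γ² > ε' with ε, ε' ∈ (0,1). Then for any policy π : S → [0,1] under which v_3 and w are ε'-unimprovable, π(v_3) = max{min{(α/(2β))π(v_1) + (ψ/(2β))π(v_2), 1}, 0} ± ε. -/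
open scoped BigOperators

namespace Stmt9

variable {S : Type*} [Fintype S] [DecidableEq S]

/-- Transition kernel of a turn-based game with binary actions at each state. -/
def IsBKernel (P : S → Bool → S → ℝ) : Prop :=
  (∀ s a s', 0 ≤ P s a s') ∧ ∀ s a, ∑ s', P s a s' = 1

/-- A stationary policy of a binary-action turn-based game, represented by the probability
`π s ∈ [0,1]` that the controller of state `s` plays action `1` (`true`). -/
def IsBPolicy (π : S → ℝ) : Prop :=
  ∀ s, 0 ≤ π s ∧ π s ≤ 1

noncomputable def bStep (P : S → Bool → S → ℝ) (π : S → ℝ) (d : S → ℝ) : S → ℝ :=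
  fun s' => ∑ s, d s * (π s * P s true s' + (1 - π s) * P s false s')

noncomputable def bDist (P : S → Bool → S → ℝ) (π : S → ℝ) (s₀ : S) (h : ℕ) : S → ℝ :=
  (bStep P π)^[h] (fun s => if s = s₀ then (1 : ℝ) else 0)

/-- Normalized discounted value of the player with reward function `r` under policy `π`. -/
noncomputable def bVal (γ : ℝ) (P : S → Bool → S → ℝ) (π : S → ℝ) (r : S → Bool → ℝ)
    (s₀ : S) : ℝ :=
  (1 - γ) * ∑' h : ℕ, γ ^ h *
    ∑ s, bDist P π s₀ h s * (π s * r s true + (1 - π s) * r s false)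

/-- Normalized discounted action-value for the controller of `s` (with reward function `r`). -/
noncomputable def bQ (γ : ℝ) (P : S → Bool → S → ℝ) (π : S → ℝ) (r : S → Bool → ℝ)
    (s : S) (a : Bool) : ℝ :=
  (1 - γ) * r s a + γ * ∑ s', P s a s' * bVal γ P π r s'

/-- `s` is ε-unimprovable under `π` (for the controller's reward function `r`):
`max_{a'} Q(s,a') - min_{a : π(s) ≠ 1-a} Q(s,a) ≤ ε`, where the min ranges over actions
played with positive probability. -/
def Unimp (ε γ : ℝ) (P : S → Bool → S → ℝ) (π : S → ℝ) (r : S → Bool → ℝ) (s : S) : Prop :=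
  ∀ a' a : Bool, (if a then π s ≠ 0 else π s ≠ 1) →
    bQ γ P π r s a' - bQ γ P π r s a ≤ ε

end Stmt9

/-!
All rewards are bounded by `1`, so the value of a state is within `γ` of its normalized
immediate reward and every Q-value is within `γ²` of its one-step lookahead. Up to these errors,
`w` compares `γ (α π(v₁) + ψ π(v₂)) / 2` (action `0`: each transition probability times the
matching reward scale is `α / 2`, resp. `ψ / 2`) with `γ β π(v₃)` (action `1`), and `v₃` compares
`γ β (2 π(w) - 1)` with `0`. Since `γ |β| ε > ε' + 2γ²`, if `v₃` plays action `1` (resp. `0`)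
with positive probability, then `w` is not pure on the side that would make that action bad, and
the action `w` does play gives `(α π(v₁) + ψ π(v₂)) / (2β) ≥ π(v₃) - ε` (resp. `≤ π(v₃) + ε`).
Clamping to `[0, 1]` preserves these bounds.
-/

lemma abs_sum_mul_le_s9 {ι : Type*} {T : Finset ι} {d f : ι → ℝ} {c : ℝ}
    (hd0 : ∀ i ∈ T, 0 ≤ d i) (hd1 : ∑ i ∈ T, d i = 1) (hf : ∀ i ∈ T, |f i| ≤ c) :
    |∑ i ∈ T, d i * f i| ≤ c :=
  calc |∑ i ∈ T, d i * f i| ≤ ∑ i ∈ T, d i * c := by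
        refine (Finset.abs_sum_le_sum_abs _ _).trans (Finset.sum_le_sum fun i hi => ?_)
        rw [abs_mul, abs_of_nonneg (hd0 i hi)]
        exact mul_le_mul_of_nonneg_left (hf i hi) (hd0 i hi)
    _ = c := by rw [← Finset.sum_mul, hd1, one_mul]

lemma sum_mul_eq_sum_mul_of_sum_eq_one {ι : Type*} [Fintype ι] {p : ι → ℝ}
    (hp0 : ∀ i, 0 ≤ p i) (hp1 : ∑ i, p i = 1) {T : Finset ι} (hT : ∑ i ∈ T, p i = 1)
    (g : ι → ℝ) : ∑ i, p i * g i = ∑ i ∈ T, p i * g i := by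
  classical
  have hzero : ∀ i ∈ Finset.univ \ T, p i = 0 := by
    refine (Finset.sum_eq_zero_iff_of_nonneg fun i _ => hp0 i).1 ?_
    linarith [Finset.sum_sdiff (f := p) (Finset.subset_univ T)]
  refine (Finset.sum_subset (Finset.subset_univ T) fun i _ hi => ?_).symm
  rw [hzero i (by simpa using hi), zero_mul]

lemma abs_sub_clamp_le {x t ε : ℝ} (hx : x ∈ Set.Icc (0 : ℝ) 1) (hε : 0 ≤ ε)
    (hlow : x ≠ 0 → x - ε ≤ t) (hhigh : x ≠ 1 → t ≤ x + ε) :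
    |x - max (min t 1) 0| ≤ ε := by
  obtain ⟨hx0, hx1⟩ := hx
  rw [abs_sub_le_iff]
  constructor
  · rcases eq_or_ne x 0 with rfl | h
    · linarith [le_max_right (min t 1) 0]
    · linarith [hlow h, le_max_left (min t 1) 0, le_min (hlow h) (show x - ε ≤ 1 by linarith)]
  · rcases eq_or_ne x 1 with rfl | h
    · linarith [max_le (min_le_right t 1) zero_le_one]
    · linarith [max_le ((min_le_left t 1).trans (hhigh h)) (show (0 : ℝ) ≤ x + ε by linarith)]

lemma abs_sub_clamp_div_le_of_pos {b c x y η ε : ℝ} (hb : 0 < b) (hx : x ∈ Set.Icc (0 : ℝ) 1)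
    (hε : ε ∈ Set.Icc (0 : ℝ) 1) (hη : η < b * ε)
    (hx₀ : x ≠ 0 → b * (2 * y - 1) ≤ η) (hx₁ : x ≠ 1 → -(b * (2 * y - 1)) ≤ η)
    (hy₀ : y ≠ 0 → c - b * x ≤ η) (hy₁ : y ≠ 1 → b * x - c ≤ η) :
    |x - max (min (c / b) 1) 0| ≤ ε := by
  have hηb : η < b := hη.trans_le (mul_le_of_le_one_right hb.le hε.2)
  refine abs_sub_clamp_le hx hε.1 (fun h => ?_) (fun h => ?_)
  · have hy : y ≠ 1 := by rintro rfl; linarith [hx₀ h]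
    rw [le_div_iff₀ hb]
    linarith [hy₁ hy]
  · have hy : y ≠ 0 := by rintro rfl; linarith [hx₁ h]
    rw [div_le_iff₀ hb]
    linarith [hy₀ hy]

lemma abs_sub_clamp_div_le {b c x y η ε : ℝ} (hb : b ≠ 0) (hx : x ∈ Set.Icc (0 : ℝ) 1)
    (hε : ε ∈ Set.Icc (0 : ℝ) 1) (hη : η < |b| * ε)
    (hx₀ : x ≠ 0 → b * (2 * y - 1) ≤ η) (hx₁ : x ≠ 1 → -(b * (2 * y - 1)) ≤ η)
    (hy₀ : y ≠ 0 → c - b * x ≤ η) (hy₁ : y ≠ 1 → b * x - c ≤ η) :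
    |x - max (min (c / b) 1) 0| ≤ ε := by
  rcases hb.lt_or_gt with hb | hb
  · -- `(b, c, y) ↦ (-b, -c, 1 - y)` preserves the hypotheses and `c / b`.
    rw [abs_of_neg hb] at hη
    rw [← neg_div_neg_eq]
    refine abs_sub_clamp_div_le_of_pos (y := 1 - y) (neg_pos.2 hb) hx hε hη
      (fun h => by linarith [hx₀ h]) (fun h => by linarith [hx₁ h])
      (fun h => by linarith [hy₁ fun h1 => h (by rw [h1, sub_self])])
      (fun h => by linarith [hy₀ fun h0 => h (by rw [h0, sub_zero])])
  · rw [abs_of_pos hb] at hη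
    exact abs_sub_clamp_div_le_of_pos hb hx hε hη hx₀ hx₁ hy₀ hy₁

lemma min_half_mul_mul_max_one_eq_half {b : ℝ} (hb : b ≠ 0) (x : ℝ) :
    min (1 / 2) (|x| / (2 * |b|)) * (x * max 1 (|b| / |x|)) = x / 2 := by
  rcases eq_or_ne x 0 with rfl | hx
  · simp
  have hx' := abs_pos.2 hx
  have hb' := abs_pos.2 hb
  rcases le_total |x| |b| with h | h
  · rw [min_eq_right (by rw [div_le_div_iff₀ (by positivity) two_pos]; linarith),
      max_eq_right ((one_le_div hx').2 h)]
    field_simp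
  · rw [min_eq_left (by rw [div_le_div_iff₀ two_pos (by positivity)]; linarith),
      max_eq_left ((div_le_one hx').2 h)]
    ring

namespace Stmt9

variable {S : Type*}

def stepReward (π : S → ℝ) (r : S → Bool → ℝ) (s : S) : ℝ :=
  π s * r s true + (1 - π s) * r s false

lemma abs_stepReward_le {π : S → ℝ} (hπ : IsBPolicy π) {r : S → Bool → ℝ}
    (hr : ∀ s a, |r s a| ≤ 1) (s : S) : |stepReward π r s| ≤ 1 := by
  have h := abs_sum_mul_le_s9 (T := Finset.univ) (d := fun a : Bool => if a then π s else 1 - π s)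
    (f := r s) (by simp [(hπ s).1, (hπ s).2]) (by simp) (fun a _ => hr s a)
  simpa [stepReward] using h

variable [Fintype S] [DecidableEq S]

lemma bDist_succ (P : S → Bool → S → ℝ) (π : S → ℝ) (s₀ : S) (h : ℕ) :
    bDist P π s₀ (h + 1) = bStep P π (bDist P π s₀ h) :=
  Function.iterate_succ_apply' _ _ _

lemma bDist_nonneg {P : S → Bool → S → ℝ} {π : S → ℝ} (hP : IsBKernel P) (hπ : IsBPolicy π)
    (s₀ : S) (h : ℕ) (s : S) : 0 ≤ bDist P π s₀ h s := by
  induction h generalizing s with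
  | zero => simp only [bDist, Function.iterate_zero, id]; positivity
  | succ n ih =>
    rw [bDist_succ]
    refine Finset.sum_nonneg fun t _ => mul_nonneg (ih t) ?_
    have := (hπ t).2
    exact add_nonneg (mul_nonneg (hπ t).1 (hP.1 t true s))
      (mul_nonneg (by linarith) (hP.1 t false s))

lemma sum_bDist {P : S → Bool → S → ℝ} (hP : IsBKernel P) (π : S → ℝ) (s₀ : S) (h : ℕ) :
    ∑ s, bDist P π s₀ h s = 1 := by
  induction h with
  | zero => simp [bDist]
  | succ n ih =>
    simp only [bDist_succ, bStep]
    rw [Finset.sum_comm]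
    refine (Finset.sum_congr rfl fun t _ => ?_).trans ih
    rw [← Finset.mul_sum, Finset.sum_add_distrib, ← Finset.mul_sum, ← Finset.mul_sum,
      hP.2 t true, hP.2 t false]
    ring

lemma abs_bVal_sub_stepReward_le {P : S → Bool → S → ℝ} {π : S → ℝ} (hP : IsBKernel P)
    (hπ : IsBPolicy π) {γ : ℝ} (hγ0 : 0 ≤ γ) (hγ1 : γ < 1) {r : S → Bool → ℝ}
    (hr : ∀ s a, |r s a| ≤ 1) (s₀ : S) :
    |bVal γ P π r s₀ - (1 - γ) * stepReward π r s₀| ≤ γ := by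
  set e : ℕ → ℝ := fun h => ∑ s, bDist P π s₀ h s * stepReward π r s
  have he : ∀ h, |e h| ≤ 1 := fun h =>
    abs_sum_mul_le_s9 (fun s _ => bDist_nonneg hP hπ s₀ h s) (sum_bDist hP π s₀ h)
      (fun s _ => abs_stepReward_le hπ hr s)
  have he0 : e 0 = stepReward π r s₀ := by simp [e, bDist]
  have hgeom := summable_geometric_of_lt_one hγ0 hγ1
  have hbound : ∀ h, ‖γ ^ h * e h‖ ≤ γ ^ h := fun h => by
    rw [norm_mul, norm_pow, Real.norm_of_nonneg hγ0]
    exact mul_le_of_le_one_right (by positivity) (he h)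
  have htail : |∑' h, γ ^ (h + 1) * e (h + 1)| ≤ γ / (1 - γ) := by
    rw [← Real.norm_eq_abs, div_eq_mul_inv, ← tsum_geometric_of_lt_one hγ0 hγ1,
      ← tsum_mul_left]
    refine tsum_of_norm_bounded (hgeom.mul_left γ).hasSum fun h => ?_
    simpa [pow_succ, mul_comm γ] using hbound (h + 1)
  have hsplit : bVal γ P π r s₀ - (1 - γ) * stepReward π r s₀
      = (1 - γ) * ∑' h, γ ^ (h + 1) * e (h + 1) := by
    change (1 - γ) * ∑' h, γ ^ h * e h - _ = _
    rw [← he0, (Summable.of_norm_bounded hgeom hbound).tsum_eq_zero_add, pow_zero, one_mul]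
    ring
  rw [hsplit, abs_mul, abs_of_pos (sub_pos.2 hγ1)]
  calc (1 - γ) * |∑' h, γ ^ (h + 1) * e (h + 1)| ≤ (1 - γ) * (γ / (1 - γ)) := by gcongr
    _ = γ := by field_simp [(sub_pos.2 hγ1).ne']

lemma abs_bQ_sub_lookahead_le {P : S → Bool → S → ℝ} {π : S → ℝ} (hP : IsBKernel P)
    (hπ : IsBPolicy π) {γ : ℝ} (hγ0 : 0 ≤ γ) (hγ1 : γ < 1) {r : S → Bool → ℝ}
    (hr : ∀ s a, |r s a| ≤ 1) (s : S) (a : Bool) :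
    |bQ γ P π r s a -
      ((1 - γ) * r s a + γ * ∑ s', P s a s' * ((1 - γ) * stepReward π r s'))| ≤ γ ^ 2 := by
  have h := abs_sum_mul_le_s9 (fun s' _ => hP.1 s a s') (hP.2 s a)
    (fun s' _ => abs_bVal_sub_stepReward_le hP hπ hγ0 hγ1 hr s')
  rw [bQ, add_sub_add_left_eq_sub, ← mul_sub, ← Finset.sum_sub_distrib, abs_mul,
    abs_of_nonneg hγ0, sq]
  simp only [← mul_sub]
  exact mul_le_mul_of_nonneg_left h hγ0

lemma abs_bQ_sub_le_of_deterministic {P : S → Bool → S → ℝ} {π : S → ℝ}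
    (hP : IsBKernel P) (hπ : IsBPolicy π) {γ : ℝ} (hγ0 : 0 ≤ γ) (hγ1 : γ < 1)
    {r : S → Bool → ℝ} (hr : ∀ s a, |r s a| ≤ 1) {s t : S} {a : Bool}
    (hst : ∀ s', P s a s' = if s' = t then 1 else 0) (hrs : r s a = 0) {x y : ℝ}
    (hx : r t true = x / (1 - γ)) (hy : r t false = y / (1 - γ)) :
    |bQ γ P π r s a - γ * (x * π t + y * (1 - π t))| ≤ γ ^ 2 := by
  convert abs_bQ_sub_lookahead_le hP hπ hγ0 hγ1 hr s a using 3
  simp only [hst, hrs, stepReward, hx, hy, ite_mul, one_mul, zero_mul, Finset.sum_ite_eq',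
    Finset.mem_univ, if_true]
  field_simp [(sub_pos.2 hγ1).ne']
  ring

lemma abs_bQ_sub_le_of_three_successors {P : S → Bool → S → ℝ} {π : S → ℝ}
    (hP : IsBKernel P) (hπ : IsBPolicy π) {γ : ℝ} (hγ0 : 0 ≤ γ) (hγ1 : γ < 1)
    {r : S → Bool → ℝ} (hr : ∀ s a, |r s a| ≤ 1) {s t₁ t₂ z : S} {a : Bool}
    (h12 : t₁ ≠ t₂) (h1z : t₁ ≠ z) (h2z : t₂ ≠ z) {p₁ p₂ x₁ x₂ : ℝ}
    (hp₁ : P s a t₁ = p₁) (hp₂ : P s a t₂ = p₂) (hpz : P s a z = 1 - p₁ - p₂)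
    (hrs : r s a = 0) (hrz : ∀ a, r z a = 0)
    (hx₁ : r t₁ true = x₁ / (1 - γ)) (hr₁ : r t₁ false = 0)
    (hx₂ : r t₂ true = x₂ / (1 - γ)) (hr₂ : r t₂ false = 0) :
    |bQ γ P π r s a - γ * (p₁ * x₁ * π t₁ + p₂ * x₂ * π t₂)| ≤ γ ^ 2 := by
  have hsum (g : S → ℝ) : ∑ s' ∈ {t₁, t₂, z}, P s a s' * g s'
      = P s a t₁ * g t₁ + (P s a t₂ * g t₂ + P s a z * g z) := by
    rw [Finset.sum_insert (by simp [h12, h1z]), Finset.sum_insert (by simp [h2z]),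
      Finset.sum_singleton]
  have hsupp : ∑ s' ∈ {t₁, t₂, z}, P s a s' = 1 := by
    simpa [hp₁, hp₂, hpz] using hsum 1
  convert abs_bQ_sub_lookahead_le hP hπ hγ0 hγ1 hr s a using 3
  rw [sum_mul_eq_sum_mul_of_sum_eq_one (hP.1 s a) (hP.2 s a) hsupp, hsum]
  simp only [hp₁, hp₂, hrs, stepReward, hrz, hx₁, hr₁, hx₂, hr₂]
  field_simp [(sub_pos.2 hγ1).ne']
  ring

theorem g_times_plus_gadget_general (γ ε ε' α ψ β : ℝ) (hγ0 : 0 ≤ γ) (hγ1 : γ < 1)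
    (hε : ε ∈ Set.Ioo (0:ℝ) 1) (hε' : ε' ∈ Set.Ioo (0:ℝ) 1)
    (hcond : γ * |β| * ε - 2 * γ ^ 2 > ε')
    (P : S → Bool → S → ℝ) (hP : IsBKernel P)
    (v1 v2 v3 w z : S) (h12 : v1 ≠ v2) (h1z : v1 ≠ z) (h2z : v2 ≠ z)
    (hPw01 : P w false v1 = min (1/2) (|α| / (2 * |β|)))
    (hPw02 : P w false v2 = min (1/2) (|ψ| / (2 * |β|)))
    (hPw0z : P w false z = 1 - min (1/2) (|α| / (2 * |β|)) - min (1/2) (|ψ| / (2 * |β|)))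
    (hPw1 : ∀ s', P w true s' = if s' = v3 then 1 else 0)
    (hPv30 : ∀ s', P v3 false s' = if s' = w then 1 else 0)
    (hPv31 : ∀ s', P v3 true s' = if s' = z then 1 else 0)
    (rw rv3 : S → Bool → ℝ)
    (hrwB : ∀ s a, |rw s a| ≤ 1) (hrv3B : ∀ s a, |rv3 s a| ≤ 1)
    (hrw11 : rw v1 true = α * max 1 (|β| / |α|) / (1 - γ))
    (hrw21 : rw v2 true = ψ * max 1 (|β| / |ψ|) / (1 - γ))
    (hrw31 : rw v3 true = β / (1 - γ))
    (hrw10 : rw v1 false = 0) (hrw20 : rw v2 false = 0) (hrw30 : rw v3 false = 0)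
    (hrww : ∀ a, rw w a = 0) (hrwz : ∀ a, rw z a = 0)
    (hrv3w1 : rv3 w true = β / (1 - γ)) (hrv3w0 : rv3 w false = -β / (1 - γ))
    (hrv3v : ∀ a, rv3 v3 a = 0) (hrv3z : ∀ a, rv3 z a = 0)
    (π : S → ℝ) (hπ : IsBPolicy π)
    (hw : Unimp ε' γ P π rw w) (hv3 : Unimp ε' γ P π rv3 v3) :
    |π v3 - max (min (α / (2 * β) * π v1 + ψ / (2 * β) * π v2) 1) 0| ≤ ε := by
  have hγβ : γ * β ≠ 0 := by
    rintro h
    rw [← abs_eq_zero, abs_mul, abs_of_nonneg hγ0] at h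
    rw [h, zero_mul] at hcond
    linarith [hε'.1, sq_nonneg γ]
  have hβ : β ≠ 0 := right_ne_zero_of_mul hγβ
  have hw1 := abs_bQ_sub_le_of_deterministic hP hπ hγ0 hγ1 hrwB hPw1 (hrww true) hrw31
    (by rw [hrw30, zero_div])
  have hw0 := abs_bQ_sub_le_of_three_successors hP hπ hγ0 hγ1 hrwB h12 h1z h2z hPw01 hPw02
    hPw0z (hrww false) hrwz hrw11 hrw10 hrw21 hrw20
  rw [min_half_mul_mul_max_one_eq_half hβ, min_half_mul_mul_max_one_eq_half hβ] at hw0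
  have h31 := abs_bQ_sub_le_of_deterministic hP hπ hγ0 hγ1 hrv3B hPv31 (hrv3v true)
    (x := 0) (y := 0) (by rw [hrv3z, zero_div]) (by rw [hrv3z, zero_div])
  have h30 := abs_bQ_sub_le_of_deterministic hP hπ hγ0 hγ1 hrv3B hPv30 (hrv3v false)
    hrv3w1 hrv3w0
  obtain ⟨hw1l, hw1u⟩ := abs_le.1 hw1
  obtain ⟨hw0l, hw0u⟩ := abs_le.1 hw0
  obtain ⟨h31l, h31u⟩ := abs_le.1 h31
  obtain ⟨h30l, h30u⟩ := abs_le.1 h30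
  have key := abs_sub_clamp_div_le (c := γ * ((α * π v1 + ψ * π v2) / 2)) (y := π w)
    (η := ε' + 2 * γ ^ 2) hγβ (hπ v3) ⟨hε.1.le, hε.2.le⟩
    (by rw [abs_mul, abs_of_nonneg hγ0]; linarith)
    (fun h => by linarith [hv3 false true h]) (fun h => by linarith [hv3 true false h])
    (fun h => by linarith [hw false true h]) (fun h => by linarith [hw true false h])
  rw [mul_div_mul_left _ _ (left_ne_zero_of_mul hγβ)] at key
  convert key using 4
  field_simp

/-- G_{×,+} gate gadget: if the gate `G_{×,+}(α/(2β), ψ/(2β) | v1, v2 | v3)` embeds via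
`(v1, v2, v3, w)` and constants `(α, ψ, β)` of absolute value at most `1-γ`, and
`γ|β|ε - 2γ² > ε'`, then for any policy under which `v3, w` are ε'-unimprovable,
`π(v3) = max{min{(α/(2β))π(v1) + (ψ/(2β))π(v2), 1}, 0} ± ε`. -/
theorem g_times_plus_gadget (γ ε ε' α ψ β : ℝ) (hγ0 : 0 ≤ γ) (hγ1 : γ < 1)
    (hε : ε ∈ Set.Ioo (0:ℝ) 1) (hε' : ε' ∈ Set.Ioo (0:ℝ) 1)
    (hα : |α| ≤ 1 - γ) (hψ : |ψ| ≤ 1 - γ) (hβ : |β| ≤ 1 - γ)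
    (hcond : γ * |β| * ε - 2 * γ ^ 2 > ε')
    (P : S → Bool → S → ℝ) (hP : IsBKernel P)
    (v1 v2 v3 w z : S) (h12 : v1 ≠ v2) (h1z : v1 ≠ z) (h2z : v2 ≠ z)
    (hPz : ∀ a s', P z a s' = if s' = z then 1 else 0)
    (hPw01 : P w false v1 = min (1/2) (|α| / (2 * |β|)))
    (hPw02 : P w false v2 = min (1/2) (|ψ| / (2 * |β|)))
    (hPw0z : P w false z = 1 - min (1/2) (|α| / (2 * |β|)) - min (1/2) (|ψ| / (2 * |β|)))
    (hPw1 : ∀ s', P w true s' = if s' = v3 then 1 else 0)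
    (hPv30 : ∀ s', P v3 false s' = if s' = w then 1 else 0)
    (hPv31 : ∀ s', P v3 true s' = if s' = z then 1 else 0)
    (rw rv3 : S → Bool → ℝ)
    (hrwB : ∀ s a, |rw s a| ≤ 1) (hrv3B : ∀ s a, |rv3 s a| ≤ 1)
    (hrw11 : rw v1 true = α * max 1 (|β| / |α|) / (1 - γ))
    (hrw21 : rw v2 true = ψ * max 1 (|β| / |ψ|) / (1 - γ))
    (hrw31 : rw v3 true = β / (1 - γ))
    (hrw10 : rw v1 false = 0) (hrw20 : rw v2 false = 0) (hrw30 : rw v3 false = 0)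
    (hrww : ∀ a, rw w a = 0) (hrwz : ∀ a, rw z a = 0)
    (hrv3w1 : rv3 w true = β / (1 - γ)) (hrv3w0 : rv3 w false = -β / (1 - γ))
    (hrv3v : ∀ a, rv3 v3 a = 0) (hrv3z : ∀ a, rv3 z a = 0)
    (π : S → ℝ) (hπ : IsBPolicy π)
    (hw : Unimp ε' γ P π rw w) (hv3 : Unimp ε' γ P π rv3 v3) :
    |π v3 - max (min (α / (2 * β) * π v1 + ψ / (2 * β) * π v2) 1) 0| ≤ ε :=
  g_times_plus_gadget_general γ ε ε' α ψ β hγ0 hγ1 hε hε' hcond P hP v1 v2 v3 w z h12 h1z h2z hPw01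
    hPw02 hPw0z hPw1 hPv30 hPv31 rw rv3 hrwB hrv3B hrw11 hrw21 hrw31 hrw10 hrw20 hrw30 hrww hrwz
    hrv3w1 hrv3w0 hrv3v hrv3z π hπ hw hv3

end Stmt9
end

section
/- (Averaging cut construction) Fix ε ∈ (0,1) and let ε' ∈ [√ε, 2√ε] be such that 4/ε' is a power of 2. Let π be an assignment of values in [0,1] to nodes including a, a', σ, σ_k, b_k (k ∈ [4/ε']), d_{j,k}. Suppose: π(σ)=1; π(σ_k) = kε'/4 ± ε for each k; π(b_k) = 1 ± ε whenever π(σ_k) ≤ π(a) - ε and π(b_k) = 0 ± ε whenever π(σ_k) ≥ π(a) + ε; π(d_{1,k}) = (π(b_{2k-1})+π(b_{2k}))/2 ± ε, π(d_{j,k}) = (π(d_{j-1,2k-1})+π(d_{j-1,2k}))/2 ± ε, and π(a') = π(d_{log_2(4/ε'),1}) ± ε. Then |π(a) - π(a')| ≤ 66√ε. -/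
/-!
The comparison gates force `b_k ≈ 1` for the grid points `k ε'/4 ≤ a - 2ε` and `b_k ≈ 0` for
`k ε'/4 > a + 2ε`, so counting grid points gives `(ε'/4) ∑ b_k = a ± (3ε + ε'/4)`. Each level of
the averaging tree adds at most `ε` to the deviation of a node from the mean of its leaves, so
the root is that mean up to `L ε`. Since `ε ≤ ε' √ε` and `2^L ε' = 4`, the total error
`(L + 4) ε + ε'/4` is at most `21 √ε`.
-/

open scoped BigOperators

namespace Stmt10

open Finset

section Counting

variable {h x : ℝ}

lemma mul_card_filter_mul_le_le (hh : 0 < h) (N : ℕ) (hx : 0 ≤ x) :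
    h * #{k ∈ Icc 1 N | ((k : ℕ) : ℝ) * h ≤ x} ≤ x := by
  have hsub : {k ∈ Icc 1 N | ((k : ℕ) : ℝ) * h ≤ x} ⊆ Icc 1 ⌊x / h⌋₊ := by
    intro k hk
    simp only [mem_filter, mem_Icc] at hk ⊢
    exact ⟨hk.1.1, Nat.le_floor ((le_div_iff₀ hh).2 hk.2)⟩
  have hcard : (#{k ∈ Icc 1 N | ((k : ℕ) : ℝ) * h ≤ x} : ℝ) ≤ x / h :=
    calc (#{k ∈ Icc 1 N | ((k : ℕ) : ℝ) * h ≤ x} : ℝ) ≤ ⌊x / h⌋₊ := by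
          exact_mod_cast (card_le_card hsub).trans (by simp)
      _ ≤ x / h := Nat.floor_le (div_nonneg hx hh.le)
  rwa [le_div_iff₀' hh] at hcard

lemma sub_lt_mul_card_filter_mul_le (hh : 0 < h) {N : ℕ} (hx : x ≤ N * h) :
    x - h < h * #{k ∈ Icc 1 N | ((k : ℕ) : ℝ) * h ≤ x} := by
  have hsub : Icc 1 ⌊x / h⌋₊ ⊆ {k ∈ Icc 1 N | ((k : ℕ) : ℝ) * h ≤ x} := by
    intro k hk
    simp only [mem_filter, mem_Icc] at hk ⊢
    refine ⟨⟨hk.1, hk.2.trans (Nat.floor_le_of_le ((div_le_iff₀ hh).2 hx))⟩, ?_⟩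
    exact (le_div_iff₀ hh).1 ((Nat.le_floor_iff' (by omega)).1 hk.2)
  have hcard : x / h - 1 < #{k ∈ Icc 1 N | ((k : ℕ) : ℝ) * h ≤ x} :=
    calc x / h - 1 < ⌊x / h⌋₊ := Nat.sub_one_lt_floor _
      _ ≤ #{k ∈ Icc 1 N | ((k : ℕ) : ℝ) * h ≤ x} := by
          exact_mod_cast (by simp : ⌊x / h⌋₊ = #(Icc 1 ⌊x / h⌋₊)).le.trans (card_le_card hsub)
  have := mul_lt_mul_of_pos_left hcard hh
  rwa [mul_sub, mul_div_cancel₀ _ hh.ne', mul_one] at this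

theorem abs_sub_mul_sum_le_of_threshold {N : ℕ} {a δ ε h : ℝ} (hε : 0 ≤ ε) (hh : 0 < h)
    (hNh : N * h = 1) (hlo : 0 ≤ a + δ) (hhi : a - δ ≤ 1) (b : ℕ → ℝ)
    (hb : ∀ k ∈ Icc 1 N, b k ∈ Set.Icc 0 1)
    (hb1 : ∀ k ∈ Icc 1 N, k * h ≤ a - δ → 1 - ε ≤ b k)
    (hb0 : ∀ k ∈ Icc 1 N, a + δ < k * h → b k ≤ ε) :
    |a - h * ∑ k ∈ Icc 1 N, b k| ≤ δ + ε + h := by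
  have hcard : #(Icc 1 N) = N := by simp
  have hlow : ∑ k ∈ Icc 1 N, ((if (k : ℝ) * h ≤ a - δ then 1 else 0) - ε) ≤
      ∑ k ∈ Icc 1 N, b k := by
    refine sum_le_sum fun k hk ↦ ?_
    split_ifs with hkh
    · exact hb1 k hk hkh
    · linarith [(hb k hk).1]
  have hup : ∑ k ∈ Icc 1 N, b k ≤
      ∑ k ∈ Icc 1 N, ((if (k : ℝ) * h ≤ a + δ then 1 else 0) + ε) := by
    refine sum_le_sum fun k hk ↦ ?_
    split_ifs with hkh
    · linarith [(hb k hk).2]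
    · linarith [hb0 k hk (not_le.1 hkh)]
  rw [sum_sub_distrib, sum_boole, sum_const, hcard, nsmul_eq_mul] at hlow
  rw [sum_add_distrib, sum_boole, sum_const, hcard, nsmul_eq_mul] at hup
  have hNε : h * (N * ε) = ε := by rw [mul_left_comm, ← mul_assoc, hNh, one_mul]
  have hlow_scaled := mul_le_mul_of_nonneg_left hlow hh.le
  have hup_scaled := mul_le_mul_of_nonneg_left hup hh.le
  have hcount_low := sub_lt_mul_card_filter_mul_le hh (x := a - δ) (N := N) (by linarith)
  have hcount_up := mul_card_filter_mul_le_le hh N hlo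
  rw [abs_le]
  constructor <;> linarith

end Counting

section Tree

/-- The leaves `2^j (k-1) < i ≤ 2^j k` of the binary tree below the `k`-th node of level `j`. -/
def leaves (j k : ℕ) : Finset ℕ := Ioc (2 ^ j * (k - 1)) (2 ^ j * k)

lemma leaves_zero {k : ℕ} (hk : 1 ≤ k) : leaves 0 k = {k} := by
  ext i; simp only [leaves, pow_zero, one_mul, mem_Ioc, mem_singleton]; omega

lemma leaves_one (j : ℕ) : leaves j 1 = Icc 1 (2 ^ j) := by
  ext i; simp only [leaves, mem_Ioc, mem_Icc]; omega

lemma sum_leaves_succ {M : Type*} [AddCommMonoid M] (f : ℕ → M) (j : ℕ) {k : ℕ} (hk : 1 ≤ k) :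
    ∑ i ∈ leaves (j + 1) k, f i =
      ∑ i ∈ leaves j (2 * k - 1), f i + ∑ i ∈ leaves j (2 * k), f i := by
  obtain ⟨k, rfl⟩ := Nat.exists_eq_add_of_le' hk
  have h₁ : 2 ^ (j + 1) * (k + 1 - 1) = 2 ^ j * (2 * (k + 1) - 1 - 1) := by
    rw [show 2 * (k + 1) - 1 - 1 = 2 * k by omega, Nat.add_sub_cancel]; ring
  have h₂ : 2 ^ (j + 1) * (k + 1) = 2 ^ j * (2 * (k + 1)) := by ring
  rw [leaves, leaves, leaves, h₁, h₂, show 2 * (k + 1) - 1 = 2 * k + 1 by omega]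
  exact (sum_Ioc_consecutive f (by gcongr; omega) (by gcongr; omega)).symm

theorem abs_sub_sum_leaves_div_le {L : ℕ} {ε : ℝ} {d : ℕ → ℕ → ℝ}
    (htree : ∀ j ∈ Icc 1 L, ∀ k ∈ Icc 1 (2 ^ (L - j)),
        |d j k - (d (j - 1) (2 * k - 1) + d (j - 1) (2 * k)) / 2| ≤ ε) :
    ∀ j ≤ L, ∀ k ∈ Icc 1 (2 ^ (L - j)),
      |d j k - (∑ i ∈ leaves j k, d 0 i) / 2 ^ j| ≤ j * ε := by
  intro j
  induction j with
  | zero =>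
    intro _ k hk
    simp [leaves_zero (mem_Icc.1 hk).1]
  | succ j ih =>
    intro hj k hk
    rw [mem_Icc] at hk
    have hpow : 2 ^ (L - j) = 2 * 2 ^ (L - (j + 1)) := by
      rw [← pow_succ']; congr 1; omega
    have hleft := ih (by omega) (2 * k - 1) (mem_Icc.2 ⟨by omega, by omega⟩)
    have hright := ih (by omega) (2 * k) (mem_Icc.2 ⟨by omega, by omega⟩)
    have hnode := htree (j + 1) (mem_Icc.2 ⟨by omega, hj⟩) k (mem_Icc.2 hk)
    rw [Nat.add_sub_cancel] at hnode
    have havg : (∑ i ∈ leaves (j + 1) k, d 0 i) / 2 ^ (j + 1) =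
        ((∑ i ∈ leaves j (2 * k - 1), d 0 i) / 2 ^ j + (∑ i ∈ leaves j (2 * k), d 0 i) / 2 ^ j)
          / 2 := by
      rw [sum_leaves_succ _ _ hk.1, pow_succ]; field_simp
    rw [havg]
    push_cast
    rw [abs_le] at hleft hright hnode ⊢
    constructor <;> linarith

end Tree

lemma add_four_mul_add_div_four_le_sqrt {ε ε' : ℝ} {L : ℕ} (hε : 0 ≤ ε)
    (hpow : (2 : ℝ) ^ L * ε' = 4) (hlo : √ε ≤ ε') (hhi : ε' ≤ 2 * √ε) :
    (L + 4) * ε + ε' / 4 ≤ 21 * √ε := by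
  have hL : (L : ℝ) + 4 ≤ 5 * 2 ^ L := by
    have : (L : ℝ) ≤ 2 ^ L := by exact_mod_cast Nat.lt_two_pow_self.le
    linarith [one_le_pow₀ (M₀ := ℝ) (a := 2) (n := L) one_le_two]
  have hε_le : ε ≤ ε' * √ε := by
    calc ε = √ε * √ε := (Real.mul_self_sqrt hε).symm
      _ ≤ ε' * √ε := by gcongr
  calc (L + 4) * ε + ε' / 4 ≤ 5 * 2 ^ L * (ε' * √ε) + ε' / 4 := by gcongr
    _ = 20 * √ε + ε' / 4 := by rw [← mul_assoc, mul_assoc 5, hpow]; ring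
    _ ≤ 21 * √ε := by linarith

theorem averaging_cut_general (ε ε' : ℝ) (L : ℕ)
    (hε : 0 < ε)
    (hε'pow : (2 : ℝ) ^ L * ε' = 4)
    (hε'lo : Real.sqrt ε ≤ ε') (hε'hi : ε' ≤ 2 * Real.sqrt ε)
    (a a' : ℝ) (ha : a ∈ Set.Icc (0:ℝ) 1)
    (σk : ℕ → ℝ) (d : ℕ → ℕ → ℝ)
    (hdrange : ∀ j ∈ Finset.Icc 0 L, ∀ k ∈ Finset.Icc 1 (2 ^ (L - j)),
        d j k ∈ Set.Icc (0:ℝ) 1)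
    -- `π(σ_k) = k·ε'/4 ± ε`
    (hσ : ∀ k ∈ Finset.Icc 1 (2 ^ L), |σk k - k * ε' / 4| ≤ ε)
    -- comparison gates: `b_k = 1 ± ε` when `σ_k ≤ a - ε` and `b_k = 0 ± ε` when `σ_k ≥ a + ε`
    (hb1 : ∀ k ∈ Finset.Icc 1 (2 ^ L), σk k ≤ a - ε → |d 0 k - 1| ≤ ε)
    (hb0 : ∀ k ∈ Finset.Icc 1 (2 ^ L), σk k ≥ a + ε → |d 0 k| ≤ ε)
    -- binary averaging tree
    (htree : ∀ j ∈ Finset.Icc 1 L, ∀ k ∈ Finset.Icc 1 (2 ^ (L - j)),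
        |d j k - (d (j - 1) (2 * k - 1) + d (j - 1) (2 * k)) / 2| ≤ ε)
    -- output gate
    (hout : |a' - d L 1| ≤ ε) :
    |a - a'| ≤ 66 * Real.sqrt ε := by
  have hh : 0 < ε' / 4 := by linarith [Real.sqrt_pos.2 hε]
  have hNh : ((2 ^ L : ℕ) : ℝ) * (ε' / 4) = 1 := by push_cast; linarith
  have hgrid : ∀ k : ℕ, (k : ℝ) * ε' / 4 = k * (ε' / 4) := fun k ↦ mul_div_assoc _ _ _
  have hleaf1 : ∀ k ∈ Icc 1 (2 ^ L), ((k : ℕ) : ℝ) * (ε' / 4) ≤ a - 2 * ε → 1 - ε ≤ d 0 k :=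
    fun k hk hka ↦ by
      have := hb1 k hk (by linarith [(abs_le.1 (hσ k hk)).2, hgrid k])
      linarith [(abs_le.1 this).1]
  have hleaf0 : ∀ k ∈ Icc 1 (2 ^ L), a + 2 * ε < ((k : ℕ) : ℝ) * (ε' / 4) → d 0 k ≤ ε :=
    fun k hk hka ↦ by
      have := hb0 k hk (by linarith [(abs_le.1 (hσ k hk)).1, hgrid k])
      linarith [(abs_le.1 this).2]
  have hmean := abs_sub_mul_sum_le_of_threshold hε.le hh hNh (by linarith [ha.1])
    (by linarith [ha.2]) (d 0) (fun k hk ↦ hdrange 0 (by simp) k (by simpa using hk))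
    hleaf1 hleaf0
  have hroot := abs_sub_sum_leaves_div_le htree L le_rfl 1 (by simp)
  rw [leaves_one, div_eq_mul_inv, mul_comm,
    inv_eq_of_mul_eq_one_right (by linarith : (2 : ℝ) ^ L * (ε' / 4) = 1)] at hroot
  have hbudget := add_four_mul_add_div_four_le_sqrt hε.le hε'pow hε'lo hε'hi
  rw [abs_le] at hmean hroot hout ⊢
  constructor <;> linarith [Real.sqrt_nonneg ε]

/-- Averaging cut construction (quantitative core of Claim real-unary).
Here `d 0` plays the role of the family `b`, `d j` for `1 ≤ j ≤ L` are the levels of the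
binary averaging tree, and `4/ε' = 2^L`. From grid comparisons of `a` against the thresholds
`σk k ≈ k·ε'/4` and the averaging-tree relations, we conclude `|a - a'| ≤ 66√ε`. -/
theorem averaging_cut (ε ε' : ℝ) (L : ℕ)
    (hε : 0 < ε) (hε1 : ε < 1)
    (hε'pow : (2 : ℝ) ^ L * ε' = 4)
    (hε'lo : Real.sqrt ε ≤ ε') (hε'hi : ε' ≤ 2 * Real.sqrt ε)
    (a a' : ℝ) (ha : a ∈ Set.Icc (0:ℝ) 1) (ha' : a' ∈ Set.Icc (0:ℝ) 1)
    (σk : ℕ → ℝ) (d : ℕ → ℕ → ℝ)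
    (hσrange : ∀ k ∈ Finset.Icc 1 (2 ^ L), σk k ∈ Set.Icc (0:ℝ) 1)
    (hdrange : ∀ j ∈ Finset.Icc 0 L, ∀ k ∈ Finset.Icc 1 (2 ^ (L - j)),
        d j k ∈ Set.Icc (0:ℝ) 1)
    -- `π(σ_k) = k·ε'/4 ± ε`
    (hσ : ∀ k ∈ Finset.Icc 1 (2 ^ L), |σk k - k * ε' / 4| ≤ ε)
    -- comparison gates: `b_k = 1 ± ε` when `σ_k ≤ a - ε` and `b_k = 0 ± ε` when `σ_k ≥ a + ε`
    (hb1 : ∀ k ∈ Finset.Icc 1 (2 ^ L), σk k ≤ a - ε → |d 0 k - 1| ≤ ε)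
    (hb0 : ∀ k ∈ Finset.Icc 1 (2 ^ L), σk k ≥ a + ε → |d 0 k| ≤ ε)
    -- binary averaging tree
    (htree : ∀ j ∈ Finset.Icc 1 L, ∀ k ∈ Finset.Icc 1 (2 ^ (L - j)),
        |d j k - (d (j - 1) (2 * k - 1) + d (j - 1) (2 * k)) / 2| ≤ ε)
    -- output gate
    (hout : |a' - d L 1| ≤ ε) :
    |a - a'| ≤ 66 * Real.sqrt ε :=
  averaging_cut_general ε ε' L hε hε'pow hε'lo hε'hi a a' ha σk d hdrange hσ hb1 hb0 htree hout

end Stmt10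
end

section
/- In a turn-based stochastic game, for every stationary joint policy π there exists a stationary product policy π' with V_i^{π'}(s) = V_i^π(s) for all players i and states s. Hence for any ε > 0, any ε-perfect stationary CCE can be converted in polynomial time to an ε-perfect stationary NE, and computing ε-stationary NE and ε-stationary CCE are equivalent in turn-based games. -/
open scoped BigOperators

namespace Stmt12

variable {S : Type*} [Fintype S] [DecidableEq S]
variable {m : ℕ} {A : Fin m → Type*} [∀ i, Fintype (A i)] [∀ i, Nonempty (A i)]

def IsKernel {α : Type*} [Fintype α] (P : S → α → S → ℝ) : Prop :=
  (∀ s a s', 0 ≤ P s a s') ∧ ∀ s a, ∑ s', P s a s' = 1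

def IsPolicy {α : Type*} [Fintype α] (π : S → α → ℝ) : Prop :=
  (∀ s a, 0 ≤ π s a) ∧ ∀ s, ∑ a, π s a = 1

noncomputable def step {α : Type*} [Fintype α] (P : S → α → S → ℝ) (π : S → α → ℝ)
    (d : S → ℝ) : S → ℝ :=
  fun s' => ∑ s, ∑ a, d s * π s a * P s a s'

noncomputable def dist {α : Type*} [Fintype α] (P : S → α → S → ℝ) (π : S → α → ℝ)
    (s₀ : S) (h : ℕ) : S → ℝ :=
  (step P π)^[h] (fun s => if s = s₀ then (1 : ℝ) else 0)

/-- Normalized discounted value `V^π(s₀) = (1-γ)·E[Σ_{h≥1} γ^{h-1} r(s_h,a_h)]`. -/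
noncomputable def val (γ : ℝ) {α : Type*} [Fintype α] (P : S → α → S → ℝ) (π : S → α → ℝ)
    (r : S → α → ℝ) (s₀ : S) : ℝ :=
  (1 - γ) * ∑' h : ℕ, γ ^ h * ∑ s, dist P π s₀ h s * ∑ a, π s a * r s a

/-- Normalized discounted action-value `Q^π(s,a)`. -/
noncomputable def qval (γ : ℝ) {α : Type*} [Fintype α] (P : S → α → S → ℝ) (π : S → α → ℝ)
    (r : S → α → ℝ) (s : S) (a : α) : ℝ :=
  (1 - γ) * r s a + γ * ∑ s', P s a s' * val γ P π r s'

/-- The joint (product) policy induced by a tuple of per-player policies. -/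
noncomputable def prodPolicy (πp : ∀ i : Fin m, S → A i → ℝ) : S → (∀ i, A i) → ℝ :=
  fun s a => ∏ i, πp i s (a i)

/-- `Qbar γ P πp r i s aᵢ = E_{a₋ᵢ ~ π₋ᵢ(s)}[Q_i^π(s, (aᵢ, a₋ᵢ))]` for the product policy `πp`
(using that `πp i s` sums to one, averaging the `i`-th coordinate out is harmless). -/
noncomputable def Qbar (γ : ℝ) (P : S → (∀ i, A i) → S → ℝ) (πp : ∀ i : Fin m, S → A i → ℝ)
    (r : S → (∀ i, A i) → ℝ) (i : Fin m) (s : S) (aᵢ : A i) : ℝ :=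
  ∑ a : ∀ j, A j, prodPolicy πp s a * qval γ P (prodPolicy πp) r s (Function.update a i aᵢ)

/-- Best-response value `V_i^{†,π₋ᵢ}(s)` of player `i` against the product policy `πp`:
the supremum over stationary policies of player `i` of the resulting value. -/
noncomputable def brVal (γ : ℝ) (P : S → (∀ i, A i) → S → ℝ) (πp : ∀ i : Fin m, S → A i → ℝ)
    (r : S → (∀ i, A i) → ℝ) (i : Fin m) (s : S) : ℝ :=
  ⨆ ρ : {ρ : S → A i → ℝ // IsPolicy ρ},
    val γ P (prodPolicy (Function.update πp i ρ.1)) r s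

/-- The game is turn-based with controller map `ag`: at each state only the controller's
action affects the transition and all players' rewards. -/
def TurnBased (ag : S → Fin m) (P : S → (∀ i, A i) → S → ℝ)
    (r : Fin m → S → (∀ i, A i) → ℝ) : Prop :=
  ∀ (s : S) (a a' : ∀ i, A i), a (ag s) = a' (ag s) →
    (∀ s', P s a s' = P s a' s') ∧ ∀ j, r j s a = r j s a'

/-- The joint policy in which player `i` plays `ρ` independently while the others follow
their marginals of the joint policy `π`. -/
noncomputable def margDev (π : S → (∀ i, A i) → ℝ) (i : Fin m) (ρ : S → A i → ℝ) :
    S → (∀ i, A i) → ℝ :=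
  fun s a => ρ s (a i) * ∑ aᵢ' : A i, π s (Function.update a i aᵢ')

/-- The per-state CCE gap of player `i` under joint policy `π`:
`V_i^{†,π₋ᵢ}(s) - V_i^π(s)`. -/
noncomputable def cceGap (γ : ℝ) (P : S → (∀ i, A i) → S → ℝ) (π : S → (∀ i, A i) → ℝ)
    (r : S → (∀ i, A i) → ℝ) (i : Fin m) (s : S) : ℝ :=
  (⨆ ρ : {ρ : S → A i → ℝ // IsPolicy ρ}, val γ P (margDev π i ρ.1) r s) - val γ P π r s


/-! Only the controller's action matters at a state, so transitions, rewards and hence all values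
depend on a joint policy only through the marginal law of the controller's action at each state.
The product of the marginals of `π` has the same one-coordinate marginals as `π`; and a unilateral
deviation `margDev · i ρ` transforms one-coordinate marginals in a way that only sees the
marginals (and the total mass), so the deviation values, hence the CCE gaps, agree as well. -/

section Marginals

variable {ι : Type*} [Fintype ι] [DecidableEq ι] {κ : ι → Type*} [∀ i, Fintype (κ i)]

open Classical in
noncomputable def marginal (q : (∀ j, κ j) → ℝ) (k : ι) (b : κ k) : ℝ :=
  ∑ a with a k = b, q a

theorem sum_marginal_mul (q : (∀ j, κ j) → ℝ) (k : ι) (g : κ k → ℝ) :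
    ∑ b, marginal q k b * g b = ∑ a, q a * g (a k) := by
  classical
  simp only [marginal, Finset.sum_mul]
  rw [← Finset.sum_fiberwise Finset.univ (fun a : ∀ j, κ j => a k)]
  refine Finset.sum_congr rfl fun b _ => Finset.sum_congr rfl fun a ha => ?_
  rw [(Finset.mem_filter.1 ha).2]

theorem sum_marginal (q : (∀ j, κ j) → ℝ) (k : ι) : ∑ b, marginal q k b = ∑ a, q a := by
  simpa using sum_marginal_mul q k 1

theorem marginal_nonneg {q : (∀ j, κ j) → ℝ} (hq : ∀ a, 0 ≤ q a) (k : ι) (b : κ k) :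
    0 ≤ marginal q k b :=
  Finset.sum_nonneg fun a _ => hq a

def SameMarginal (k : ι) (q₁ q₂ : (∀ j, κ j) → ℝ) : Prop :=
  ∀ g : κ k → ℝ, ∑ a, q₁ a * g (a k) = ∑ a, q₂ a * g (a k)

theorem SameMarginal.sum_eq {k : ι} {q₁ q₂ : (∀ j, κ j) → ℝ} (h : SameMarginal k q₁ q₂) :
    ∑ a, q₁ a = ∑ a, q₂ a := by
  simpa using h 1

theorem SameMarginal.sum_mul_eq {k : ι} {q₁ q₂ : (∀ j, κ j) → ℝ} (h : SameMarginal k q₁ q₂)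
    {f : (∀ j, κ j) → ℝ} (hf : f.FactorsThrough (fun a : ∀ j, κ j => a k)) :
    ∑ a, q₁ a * f a = ∑ a, q₂ a * f a := by
  simpa only [hf.extend_apply] using h (Function.extend (fun a : ∀ j, κ j => a k) f 0)

theorem sum_prod_mul_apply {F : ∀ j, κ j → ℝ} {k : ι} (hF : ∀ j, j ≠ k → ∑ b, F j b = 1)
    (g : κ k → ℝ) : ∑ a : ∀ j, κ j, (∏ j, F j (a j)) * g (a k) = ∑ b, F k b * g b := by
  have hG : ∀ a : ∀ j, κ j, (∏ j, F j (a j)) * g (a k)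
      = ∏ j, Function.update F k (fun b => F k b * g b) j (a j) := fun a => by
    rw [Fintype.prod_eq_mul_prod_compl k, Fintype.prod_eq_mul_prod_compl k, Function.update_self,
      mul_right_comm]
    congr 1
    exact Finset.prod_congr rfl fun j hj => by rw [Function.update_of_ne (by simpa using hj)]
  rw [Finset.sum_congr rfl fun a _ => hG a, ← Fintype.prod_sum,
    Fintype.prod_eq_single k fun j hj => by rw [Function.update_of_ne hj, hF j hj],
    Function.update_self]

theorem sum_sum_mul_update (i : ι) (φ : κ i → ℝ) (ψ : (∀ j, κ j) → ℝ) :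
    ∑ a, ∑ c, φ (a i) * ψ (Function.update a i c) = (∑ b, φ b) * ∑ a, ψ a := by
  let e : (∀ j, κ j) × κ i ≃ κ i × (∀ j, κ j) :=
    { toFun := fun p => (p.1 i, Function.update p.1 i p.2)
      invFun := fun p => (Function.update p.2 i p.1, p.2 i)
      left_inv := fun p => by simp
      right_inv := fun p => by simp }
  calc ∑ a, ∑ c, φ (a i) * ψ (Function.update a i c)
      = ∑ p : κ i × (∀ j, κ j), φ p.1 * ψ p.2 := by
        rw [← Fintype.sum_prod_type']
        exact Fintype.sum_equiv e _ _ fun _ => rfl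
    _ = (∑ b, φ b) * ∑ a, ψ a := by rw [Fintype.sum_prod_type, Finset.sum_mul_sum]

end Marginals

section MarginalPolicies

omit [Fintype S] [DecidableEq S] [∀ i, Nonempty (A i)]

theorem IsPolicy.marginal {π : S → (∀ i, A i) → ℝ} (hπ : IsPolicy π) (i : Fin m) :
    IsPolicy fun s => marginal (π s) i :=
  ⟨fun s => marginal_nonneg (hπ.1 s) i, fun s => by rw [sum_marginal, hπ.2 s]⟩

theorem sameMarginal_prodPolicy_marginal {π : S → (∀ i, A i) → ℝ} (hπ : ∀ s, ∑ a, π s a = 1)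
    (s : S) (k : Fin m) :
    SameMarginal k (prodPolicy (fun i s => marginal (π s) i) s) (π s) := fun g => by
  rw [← sum_marginal_mul (π s)]
  exact sum_prod_mul_apply (F := fun j => marginal (π s) j) (fun j _ => by rw [sum_marginal, hπ]) g

theorem sum_margDev_mul_apply_self (q : S → (∀ i, A i) → ℝ) (i : Fin m) (ρ : S → A i → ℝ)
    (s : S) (g : A i → ℝ) :
    ∑ a, margDev q i ρ s a * g (a i) = (∑ b, ρ s b * g b) * ∑ a, q s a := by
  rw [← sum_sum_mul_update i (fun b => ρ s b * g b) (q s)]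
  refine Finset.sum_congr rfl fun a _ => ?_
  rw [margDev, Finset.mul_sum, Finset.sum_mul]
  exact Finset.sum_congr rfl fun c _ => by ring

theorem sum_margDev_mul_apply_of_ne (q : S → (∀ i, A i) → ℝ) {i k : Fin m} (hki : k ≠ i)
    (ρ : S → A i → ℝ) (s : S) (g : A k → ℝ) :
    ∑ a, margDev q i ρ s a * g (a k) = (∑ b, ρ s b) * ∑ a, q s a * g (a k) := by
  rw [← sum_sum_mul_update i (ρ s) (fun a => q s a * g (a k))]
  refine Finset.sum_congr rfl fun a _ => ?_
  rw [margDev, Finset.mul_sum, Finset.sum_mul]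
  refine Finset.sum_congr rfl fun c _ => ?_
  rw [Function.update_of_ne hki]
  ring

theorem sameMarginal_margDev {q₁ q₂ : S → (∀ i, A i) → ℝ} {s : S} {k : Fin m}
    (h : SameMarginal k (q₁ s) (q₂ s)) (i : Fin m) (ρ : S → A i → ℝ) :
    SameMarginal k (margDev q₁ i ρ s) (margDev q₂ i ρ s) := fun g => by
  rcases eq_or_ne k i with rfl | hki
  · rw [sum_margDev_mul_apply_self, sum_margDev_mul_apply_self, h.sum_eq]
  · rw [sum_margDev_mul_apply_of_ne _ hki, sum_margDev_mul_apply_of_ne _ hki, h g]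

end MarginalPolicies

section TurnBased

omit [∀ i, Nonempty (A i)]

variable {ag : S → Fin m} {P : S → (∀ i, A i) → S → ℝ}

omit [DecidableEq S] in
theorem step_eq_of_sameMarginal
    (hP : ∀ s s', (fun a => P s a s').FactorsThrough fun a : ∀ i, A i => a (ag s))
    {π₁ π₂ : S → (∀ i, A i) → ℝ} (h : ∀ s, SameMarginal (ag s) (π₁ s) (π₂ s)) :
    step P π₁ = step P π₂ := by
  funext d s'
  refine Finset.sum_congr rfl fun s _ => ?_
  simp only [mul_assoc]
  rw [← Finset.mul_sum, ← Finset.mul_sum, (h s).sum_mul_eq (hP s s')]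

theorem val_eq_of_sameMarginal (γ : ℝ)
    {r : Fin m → S → (∀ i, A i) → ℝ} (hTB : TurnBased ag P r)
    {π₁ π₂ : S → (∀ i, A i) → ℝ} (h : ∀ s, SameMarginal (ag s) (π₁ s) (π₂ s)) (j : Fin m)
    (s₀ : S) : val γ P π₁ (r j) s₀ = val γ P π₂ (r j) s₀ := by
  have hstep : step P π₁ = step P π₂ :=
    step_eq_of_sameMarginal (fun s s' _ _ hs => (hTB s _ _ hs).1 s') h
  have hreward : ∀ s, ∑ a, π₁ s a * r j s a = ∑ a, π₂ s a * r j s a :=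
    fun s => (h s).sum_mul_eq fun _ _ hs => (hTB s _ _ hs).2 j
  simp only [val, dist, hstep, hreward]

theorem cceGap_eq_of_sameMarginal (γ : ℝ) {r : Fin m → S → (∀ i, A i) → ℝ}
    (hTB : TurnBased ag P r)
    {π₁ π₂ : S → (∀ i, A i) → ℝ} (h : ∀ s, SameMarginal (ag s) (π₁ s) (π₂ s)) (i : Fin m)
    (s : S) : cceGap γ P π₁ (r i) i s = cceGap γ P π₂ (r i) i s := by
  rw [cceGap, cceGap, val_eq_of_sameMarginal γ hTB h i s]
  congr 1
  exact iSup_congr fun ρ =>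
    val_eq_of_sameMarginal γ hTB (fun s' => sameMarginal_margDev (h s') i ρ.1) i s

end TurnBased

theorem turn_based_cce_to_ne_general (γ : ℝ)
    (ag : S → Fin m)
    (P : S → (∀ i, A i) → S → ℝ)
    (r : Fin m → S → (∀ i, A i) → ℝ)
    (hTB : TurnBased ag P r)
    (π : S → (∀ i, A i) → ℝ) (hπ : IsPolicy π) :
    ∃ πp : ∀ i : Fin m, S → A i → ℝ,
      (∀ i, IsPolicy (πp i)) ∧
      (∀ (j : Fin m) (s : S), val γ P (prodPolicy πp) (r j) s = val γ P π (r j) s) ∧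
      (∀ ε : ℝ, 0 ≤ ε →
        (∀ i s, cceGap γ P π (r i) i s ≤ ε) →
        ∀ i s, cceGap γ P (prodPolicy πp) (r i) i s ≤ ε) := by
  have hsame : ∀ s, SameMarginal (ag s) (prodPolicy (fun i s => marginal (π s) i) s) (π s) :=
    fun s => sameMarginal_prodPolicy_marginal hπ.2 s (ag s)
  exact ⟨fun i s => marginal (π s) i, hπ.marginal, val_eq_of_sameMarginal γ hTB hsame,
    fun ε _ hcce i s => (cceGap_eq_of_sameMarginal γ hTB hsame i s).trans_le (hcce i s)⟩

/-- In a turn-based stochastic game, every stationary joint policy admits a stationary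
product policy with identical value functions; consequently any ε-perfect CCE can be
converted into an ε-perfect NE (a product policy with the same per-state gaps bounded by ε). -/
theorem turn_based_cce_to_ne (γ : ℝ) (hγ0 : 0 ≤ γ) (hγ1 : γ < 1)
    (ag : S → Fin m)
    (P : S → (∀ i, A i) → S → ℝ) (hP : IsKernel P)
    (r : Fin m → S → (∀ i, A i) → ℝ)
    (hTB : TurnBased ag P r)
    (π : S → (∀ i, A i) → ℝ) (hπ : IsPolicy π) :
    ∃ πp : ∀ i : Fin m, S → A i → ℝ,
      (∀ i, IsPolicy (πp i)) ∧
      (∀ (j : Fin m) (s : S), val γ P (prodPolicy πp) (r j) s = val γ P π (r j) s) ∧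
      (∀ ε : ℝ, 0 ≤ ε →
        (∀ i s, cceGap γ P π (r i) i s ≤ ε) →
        ∀ i s, cceGap γ P (prodPolicy πp) (r i) i s ≤ ε) :=
  turn_based_cce_to_ne_general γ ag P r hTB π hπ

end Stmt12
end

section
/- (Closeness of the intermediate game) In the setting of the intermediate game G_V: for any joint policy π, any player i, |V_{i,1}^{G,π}(μ) - V_{i,1}^{G_V,π}(μ)| ≤ 2H · Σ_{h=1}^H Pr_{trajectory ~ (G,π)}[(h, s_h) ∉ V]. In particular, if Pr[(h,s_h) ∉ V] ≤ δ_0 for every h ∈ [H], then |V_{i,1}^{G,π}(μ) - V_{i,1}^{G_V,π}(μ)| ≤ 2H²δ_0. -/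
open scoped BigOperators

namespace Stmt15

def IsKernel {σ α : Type*} [Fintype σ] (P : σ → α → σ → ℝ) : Prop :=
  (∀ s a s', 0 ≤ P s a s') ∧ ∀ s a, ∑ s', P s a s' = 1

def IsPolicy {σ α : Type*} [Fintype α] (π : σ → α → ℝ) : Prop :=
  (∀ s a, 0 ≤ π s a) ∧ ∀ s, ∑ a, π s a = 1

/-- Distribution of the state at step `h` (0-indexed) of a finite-horizon stochastic game
with step-dependent transitions `P`, nonstationary Markov policy `π` and initial
distribution `μ`. -/
noncomputable def fhDist {σ α : Type*} [Fintype σ] [Fintype α]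
    (P : ℕ → σ → α → σ → ℝ) (π : ℕ → σ → α → ℝ) (μ : σ → ℝ) : ℕ → σ → ℝ
  | 0 => μ
  | h + 1 => fun s' => ∑ s, ∑ a, fhDist P π μ h s * π h s a * P h s a s'

/-- Value `V_1^π(μ) = E[Σ_{h=1}^H r_h(s_h, a_h)]` of the finite-horizon game. -/
noncomputable def fhVal {σ α : Type*} [Fintype σ] [Fintype α] (H : ℕ)
    (P : ℕ → σ → α → σ → ℝ) (π : ℕ → σ → α → ℝ) (r : ℕ → σ → α → ℝ) (μ : σ → ℝ) : ℝ :=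
  ∑ h ∈ Finset.range H, ∑ s, fhDist P π μ h s * ∑ a, π h s a * r h s a

variable {S A : Type*} [Fintype S] [Fintype A] [DecidableEq S]

/-- Transitions of the intermediate game `G_V`: identical to `G` on pairs `(h,s) ∈ 𝒱`, and
transitioning to the absorbing state `none` from pairs outside `𝒱`. -/
noncomputable def PV (𝒱 : Finset (ℕ × S)) (P : ℕ → S → A → S → ℝ) :
    ℕ → Option S → A → Option S → ℝ :=
  fun h os a os' =>
    match os, os' with
    | some s, some s' => if (h, s) ∈ 𝒱 then P h s a s' else 0
    | some s, none => if (h, s) ∈ 𝒱 then 0 else 1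
    | none, some _ => 0
    | none, none => 1

/-- Rewards of `G_V`: identical to `G` on pairs in `𝒱`, and the maximal reward `1`
at pairs outside `𝒱` and at the absorbing state. -/
noncomputable def rV (𝒱 : Finset (ℕ × S)) (r : ℕ → S → A → ℝ) : ℕ → Option S → A → ℝ :=
  fun h os a =>
    match os with
    | some s => if (h, s) ∈ 𝒱 then r h s a else 1
    | none => 1

/-- Initial distribution of `G_V`. -/
noncomputable def muV (μ : S → ℝ) : Option S → ℝ :=
  fun os => match os with | some s => μ s | none => 0

/-!
Run `G` and `G_V` under the same policy. The sub-distribution of `G_V` on the original states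
is dominated by the state distribution of `G`, and the deficit has accumulated in the absorbing
state; every step adds at most `Pr[(h, s_h) ∉ 𝒱]` to it. At step `h` the expected rewards differ
only through this absorbed mass and through the states outside `𝒱`, where rewards in `[-1, 1]`
differ by at most `2`. Summing over the `H` steps gives the bound.
-/

open Finset

section FiniteHorizon

variable {σ α : Type*} [Fintype σ] [Fintype α]
  {P : ℕ → σ → α → σ → ℝ} {π : ℕ → σ → α → ℝ} {μ : σ → ℝ}

lemma fhDist_succ (h : ℕ) (s' : σ) :
    fhDist P π μ (h + 1) s' = ∑ s, ∑ a, fhDist P π μ h s * π h s a * P h s a s' :=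
  rfl

lemma fhDist_nonneg (hP : ∀ h s a s', 0 ≤ P h s a s') (hπ : ∀ h s a, 0 ≤ π h s a)
    (hμ : ∀ s, 0 ≤ μ s) (h : ℕ) (s : σ) : 0 ≤ fhDist P π μ h s := by
  induction h generalizing s with
  | zero => exact hμ s
  | succ h ih =>
    rw [fhDist_succ]
    exact sum_nonneg fun s' _ => sum_nonneg fun a _ =>
      mul_nonneg (mul_nonneg (ih s') (hπ h s' a)) (hP h s' a s)

lemma sum_fhDist (hP : ∀ h s a, ∑ s', P h s a s' = 1) (hπ : ∀ h s, ∑ a, π h s a = 1) (h : ℕ) :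
    ∑ s, fhDist P π μ h s = ∑ s, μ s := by
  induction h with
  | zero => rfl
  | succ h ih =>
    simp only [fhDist_succ]
    rw [sum_comm, ← ih]
    refine sum_congr rfl fun s _ => ?_
    rw [sum_comm]
    simp only [← mul_sum, hP, hπ, mul_one]

lemma abs_sum_mul_le_one {p r : α → ℝ} (hp0 : ∀ a, 0 ≤ p a) (hp1 : ∑ a, p a = 1)
    (hr : ∀ a, |r a| ≤ 1) : |∑ a, p a * r a| ≤ 1 :=
  calc |∑ a, p a * r a| ≤ ∑ a, |p a * r a| := abs_sum_le_sum_abs _ _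
    _ ≤ ∑ a, p a := sum_le_sum fun a _ => by
        rw [abs_mul, abs_of_nonneg (hp0 a)]
        exact mul_le_of_le_one_right (hp0 a) (hr a)
    _ = 1 := hp1

lemma abs_fhVal_sub_fhVal_le {σ' α' : Type*} [Fintype σ'] [Fintype α'] {H : ℕ} {c : ℝ}
    {r : ℕ → σ → α → ℝ} {P' : ℕ → σ' → α' → σ' → ℝ} {π' : ℕ → σ' → α' → ℝ}
    {r' : ℕ → σ' → α' → ℝ} {μ' : σ' → ℝ}
    (hc : ∀ h < H, |∑ s, fhDist P π μ h s * ∑ a, π h s a * r h s a -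
      ∑ s, fhDist P' π' μ' h s * ∑ a, π' h s a * r' h s a| ≤ c) :
    |fhVal H P π r μ - fhVal H P' π' r' μ'| ≤ H * c := by
  rw [fhVal, fhVal, ← sum_sub_distrib]
  calc _ ≤ ∑ h ∈ range H, |∑ s, fhDist P π μ h s * ∑ a, π h s a * r h s a -
        ∑ s, fhDist P' π' μ' h s * ∑ a, π' h s a * r' h s a| := abs_sum_le_sum_abs _ _
    _ ≤ ∑ _h ∈ range H, c := sum_le_sum fun h hh => hc h (mem_range.1 hh)
    _ = H * c := by rw [sum_const, card_range, nsmul_eq_mul]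

end FiniteHorizon

-- The term `f - g`, present in both cases, sums over the states to the mass absorbed in `G_V`.
lemma abs_mul_sub_mul_ite_le {f g ρ : ℝ} (hg : 0 ≤ g) (hgf : g ≤ f) (hρ : |ρ| ≤ 1)
    (p : Prop) [Decidable p] :
    |f * ρ - g * (if p then ρ else 1)| ≤ f - g + if p then 0 else 2 * f := by
  rw [abs_le] at hρ ⊢
  split_ifs <;> constructor <;> nlinarith

lemma isKernel_PV {σ α : Type*} [Fintype σ] [DecidableEq σ] {P : ℕ → σ → α → σ → ℝ}
    {𝒱 : Finset (ℕ × σ)} (hP : ∀ h, IsKernel (P h)) (h : ℕ) : IsKernel (PV 𝒱 P h) := by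
  constructor
  · rintro (_ | s) a (_ | s') <;> simp only [PV] <;> (try split_ifs) <;> simp [(hP h).1]
  · rintro (_ | s) a <;> simp only [PV, Fintype.sum_option]
    · simp
    · split_ifs <;> simp [(hP h).2]

section IntermediateGame

variable {σ α : Type*} [Fintype σ] [Fintype α] [DecidableEq σ]
  {P : ℕ → σ → α → σ → ℝ} {𝒱 : Finset (ℕ × σ)} {π : ℕ → σ → α → ℝ}
  {πv : ℕ → Option σ → α → ℝ} {μ : σ → ℝ}

noncomputable def probOutside (P : ℕ → σ → α → σ → ℝ) (π : ℕ → σ → α → ℝ) (μ : σ → ℝ)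
    (𝒱 : Finset (ℕ × σ)) (h : ℕ) : ℝ :=
  ∑ s ∈ univ.filter (fun s : σ => (h, s) ∉ 𝒱), fhDist P π μ h s

lemma fhDist_PV_some_succ (hext : ∀ h s a, πv h (some s) a = π h s a) (h : ℕ) (s' : σ) :
    fhDist (PV 𝒱 P) πv (muV μ) (h + 1) (some s') =
      ∑ s ∈ univ.filter (fun s : σ => (h, s) ∈ 𝒱),
        ∑ a, fhDist (PV 𝒱 P) πv (muV μ) h (some s) * π h s a * P h s a s' := by
  rw [fhDist_succ, Fintype.sum_option, sum_filter]
  simp [PV, hext, apply_ite]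

lemma fhDist_PV_none_succ (hπv : ∀ h os, ∑ a, πv h os a = 1) (h : ℕ) :
    fhDist (PV 𝒱 P) πv (muV μ) (h + 1) none = fhDist (PV 𝒱 P) πv (muV μ) h none +
      ∑ s ∈ univ.filter (fun s : σ => (h, s) ∉ 𝒱), fhDist (PV 𝒱 P) πv (muV μ) h (some s) := by
  rw [fhDist_succ, Fintype.sum_option, sum_filter]
  simp [PV, ← mul_sum, hπv, apply_ite]

lemma fhDist_PV_some_le (hP : ∀ h s a s', 0 ≤ P h s a s') (hπ : ∀ h s a, 0 ≤ π h s a)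
    (hμ : ∀ s, 0 ≤ μ s) (hext : ∀ h s a, πv h (some s) a = π h s a) (h : ℕ) (s : σ) :
    fhDist (PV 𝒱 P) πv (muV μ) h (some s) ≤ fhDist P π μ h s := by
  induction h generalizing s with
  | zero => rfl
  | succ h ih =>
    rw [fhDist_PV_some_succ hext, fhDist_succ]
    refine (sum_le_sum fun s' _ => sum_le_sum fun a _ => ?_).trans <|
      sum_le_sum_of_subset_of_nonneg (filter_subset _ _) fun s' _ _ => sum_nonneg fun a _ =>
        mul_nonneg (mul_nonneg (fhDist_nonneg hP hπ hμ h s') (hπ h s' a)) (hP h s' a s)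
    exact mul_le_mul_of_nonneg_right (mul_le_mul_of_nonneg_right (ih s') (hπ h s' a)) (hP h s' a s)

lemma fhDist_PV_none_le (hP : ∀ h s a s', 0 ≤ P h s a s') (hπ : ∀ h s a, 0 ≤ π h s a)
    (hμ : ∀ s, 0 ≤ μ s) (hπv : ∀ h os, ∑ a, πv h os a = 1)
    (hext : ∀ h s a, πv h (some s) a = π h s a) (h : ℕ) :
    fhDist (PV 𝒱 P) πv (muV μ) h none ≤ ∑ h' ∈ range h, probOutside P π μ 𝒱 h' := by
  induction h with
  | zero => simp [fhDist, muV]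
  | succ h ih =>
    rw [fhDist_PV_none_succ hπv, sum_range_succ]
    exact add_le_add ih (sum_le_sum fun s _ => fhDist_PV_some_le hP hπ hμ hext h s)

lemma sum_sub_fhDist_PV (hP : ∀ h, IsKernel (P h)) (hπ : ∀ h s, ∑ a, π h s a = 1)
    (hπv : ∀ h os, ∑ a, πv h os a = 1) (h : ℕ) :
    ∑ s, (fhDist P π μ h s - fhDist (PV 𝒱 P) πv (muV μ) h (some s)) =
      fhDist (PV 𝒱 P) πv (muV μ) h none := by
  have hG := sum_fhDist (μ := μ) (fun h => (hP h).2) hπ h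
  have hGV := sum_fhDist (μ := muV μ) (fun h => (isKernel_PV (𝒱 := 𝒱) hP h).2) hπv h
  simp only [Fintype.sum_option, muV, zero_add] at hGV
  rw [sum_sub_distrib]
  linarith

lemma sum_fhDist_PV_mul_rV {r : ℕ → σ → α → ℝ} (hπv : ∀ h os, ∑ a, πv h os a = 1)
    (hext : ∀ h s a, πv h (some s) a = π h s a) (h : ℕ) :
    ∑ os, fhDist (PV 𝒱 P) πv (muV μ) h os * ∑ a, πv h os a * rV 𝒱 r h os a =
      fhDist (PV 𝒱 P) πv (muV μ) h none + ∑ s, fhDist (PV 𝒱 P) πv (muV μ) h (some s) *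
        if (h, s) ∈ 𝒱 then ∑ a, π h s a * r h s a else 1 := by
  rw [Fintype.sum_option]
  congr 1
  · simp [rV, hπv]
  · refine sum_congr rfl fun s _ => ?_
    split_ifs with hs
    · simp [rV, hs, hext]
    · simp [rV, hs, hπv]

lemma probOutside_nonneg (hP : ∀ h s a s', 0 ≤ P h s a s') (hπ : ∀ h s a, 0 ≤ π h s a)
    (hμ : ∀ s, 0 ≤ μ s) (h : ℕ) : 0 ≤ probOutside P π μ 𝒱 h :=
  sum_nonneg fun s _ => fhDist_nonneg hP hπ hμ h s

lemma abs_stepReward_sub_PV_le {r : ℕ → σ → α → ℝ} (hP : ∀ h, IsKernel (P h))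
    (hr : ∀ h s a, |r h s a| ≤ 1) (hμ : ∀ s, 0 ≤ μ s) (hπ : ∀ h, IsPolicy (π h))
    (hπv : ∀ h, IsPolicy (πv h)) (hext : ∀ h s a, πv h (some s) a = π h s a) (h : ℕ) :
    |∑ s, fhDist P π μ h s * ∑ a, π h s a * r h s a -
      ∑ os, fhDist (PV 𝒱 P) πv (muV μ) h os * ∑ a, πv h os a * rV 𝒱 r h os a| ≤
      2 * ∑ h' ∈ range (h + 1), probOutside P π μ 𝒱 h' := by
  set f := fhDist P π μ h
  set g := fhDist (PV 𝒱 P) πv (muV μ) h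
  set ρ : σ → ℝ := fun s => ∑ a, π h s a * r h s a
  have hP0 h := (hP h).1
  have hπ0 h := (hπ h).1
  have hmuV : ∀ os, 0 ≤ muV μ os := by rintro (_ | s) <;> simp [muV, hμ]
  have hg : ∀ os, 0 ≤ g os :=
    fhDist_nonneg (fun h => (isKernel_PV hP h).1) (fun h => (hπv h).1) hmuV h
  have hgf : ∀ s, g (some s) ≤ f s := fhDist_PV_some_le hP0 hπ0 hμ hext h
  have hρ : ∀ s, |ρ s| ≤ 1 := fun s => abs_sum_mul_le_one (hπ0 h s) ((hπ h).2 s) (hr h s)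
  have hmass : g none = ∑ s, (f s - g (some s)) :=
    (sum_sub_fhDist_PV hP (fun h => (hπ h).2) (fun h => (hπv h).2) h).symm
  have houtside : ∑ s, (if (h, s) ∈ 𝒱 then 0 else 2 * f s) = 2 * probOutside P π μ 𝒱 h := by
    rw [probOutside, mul_sum, sum_filter]
    exact sum_congr rfl fun s _ => by by_cases hs : (h, s) ∈ 𝒱 <;> simp [hs, f]
  rw [sum_fhDist_PV_mul_rV (fun h => (hπv h).2) hext, sub_add_eq_sub_sub_swap,
    ← sum_sub_distrib]
  calc _ ≤ |∑ s, (f s * ρ s - g (some s) * if (h, s) ∈ 𝒱 then ρ s else 1)| + |g none| :=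
        abs_sub _ _
    _ ≤ ∑ s, (f s - g (some s) + if (h, s) ∈ 𝒱 then 0 else 2 * f s) + g none := by
        rw [abs_of_nonneg (hg none)]
        exact add_le_add_left ((abs_sum_le_sum_abs _ _).trans <| sum_le_sum fun s _ =>
          abs_mul_sub_mul_ite_le (hg (some s)) (hgf s) (hρ s) _) _
    _ = 2 * (g none + probOutside P π μ 𝒱 h) := by
        rw [sum_add_distrib, houtside, ← hmass]; ring
    _ ≤ 2 * ∑ h' ∈ range (h + 1), probOutside P π μ 𝒱 h' := by
        rw [sum_range_succ]
        gcongr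
        exact fhDist_PV_none_le hP0 hπ0 hμ (fun h => (hπv h).2) hext h

end IntermediateGame

theorem intermediate_game_closeness_general {I : Type*} (H : ℕ)
    (P : ℕ → S → A → S → ℝ) (hP : ∀ h, IsKernel (P h))
    (r : I → ℕ → S → A → ℝ) (hr : ∀ i h s a, |r i h s a| ≤ 1)
    (μ : S → ℝ) (hμ0 : ∀ s, 0 ≤ μ s)
    (𝒱 : Finset (ℕ × S))
    (π : ℕ → S → A → ℝ) (hπ : ∀ h, IsPolicy (π h))
    (πv : ℕ → Option S → A → ℝ) (hπv : ∀ h, IsPolicy (πv h))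
    (hext : ∀ h s a, πv h (some s) a = π h s a) :
    (∀ i : I,
      |fhVal H P π (r i) μ - fhVal H (PV 𝒱 P) πv (rV 𝒱 (r i)) (muV μ)| ≤
        2 * H * ∑ h ∈ Finset.range H,
          ∑ s ∈ Finset.univ.filter (fun s : S => (h, s) ∉ 𝒱), fhDist P π μ h s) ∧
    ∀ δ₀ : ℝ,
      (∀ h ∈ Finset.range H,
        ∑ s ∈ Finset.univ.filter (fun s : S => (h, s) ∉ 𝒱), fhDist P π μ h s ≤ δ₀) →
      ∀ i : I,
        |fhVal H P π (r i) μ - fhVal H (PV 𝒱 P) πv (rV 𝒱 (r i)) (muV μ)| ≤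
          2 * H ^ 2 * δ₀ := by
  have hbound (i : I) : |fhVal H P π (r i) μ - fhVal H (PV 𝒱 P) πv (rV 𝒱 (r i)) (muV μ)| ≤
      2 * H * ∑ h ∈ range H, probOutside P π μ 𝒱 h := by
    rw [mul_assoc, mul_left_comm]
    refine abs_fhVal_sub_fhVal_le fun h hh => ?_
    refine (abs_stepReward_sub_PV_le hP (hr i) hμ0 hπ hπv hext h).trans ?_
    gcongr
    · exact fun h' _ _ => probOutside_nonneg (fun h => (hP h).1) (fun h => (hπ h).1) hμ0 h'
    · exact hh
  refine ⟨hbound, fun δ₀ hδ i => (hbound i).trans ?_⟩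
  have hsum : ∑ h ∈ range H, probOutside P π μ 𝒱 h ≤ H * δ₀ := by
    simpa using sum_le_sum (f := probOutside P π μ 𝒱) hδ
  calc 2 * H * ∑ h ∈ range H, probOutside P π μ 𝒱 h ≤ 2 * H * (H * δ₀) := by gcongr
    _ = 2 * H ^ 2 * δ₀ := by ring

/-- Closeness of the intermediate game: the values of `G` and `G_V` differ by at most
`2H · Σ_{h<H} Pr[(h, s_h) ∉ 𝒱]`; in particular if each escape probability is at most `δ₀`,
they differ by at most `2H²δ₀`. -/
theorem intermediate_game_closeness {I : Type*} (H : ℕ)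
    (P : ℕ → S → A → S → ℝ) (hP : ∀ h, IsKernel (P h))
    (r : I → ℕ → S → A → ℝ) (hr : ∀ i h s a, |r i h s a| ≤ 1)
    (μ : S → ℝ) (hμ0 : ∀ s, 0 ≤ μ s) (hμ1 : ∑ s, μ s = 1)
    (𝒱 : Finset (ℕ × S))
    (π : ℕ → S → A → ℝ) (hπ : ∀ h, IsPolicy (π h))
    (πv : ℕ → Option S → A → ℝ) (hπv : ∀ h, IsPolicy (πv h))
    (hext : ∀ h s a, πv h (some s) a = π h s a) :
    (∀ i : I,
      |fhVal H P π (r i) μ - fhVal H (PV 𝒱 P) πv (rV 𝒱 (r i)) (muV μ)| ≤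
        2 * H * ∑ h ∈ Finset.range H,
          ∑ s ∈ Finset.univ.filter (fun s : S => (h, s) ∉ 𝒱), fhDist P π μ h s) ∧
    ∀ δ₀ : ℝ,
      (∀ h ∈ Finset.range H,
        ∑ s ∈ Finset.univ.filter (fun s : S => (h, s) ∉ 𝒱), fhDist P π μ h s ≤ δ₀) →
      ∀ i : I,
        |fhVal H P π (r i) μ - fhVal H (PV 𝒱 P) πv (rV 𝒱 (r i)) (muV μ)| ≤
          2 * H ^ 2 * δ₀ :=
  intermediate_game_closeness_general H P hP r hr μ hμ0 𝒱 π hπ πv hπv hext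

end Stmt15
end
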